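/- arXiv:1307.7314 — 5 statements merged into one kernel-verified Lean document; each statement's English description precedes it below -/
import Mathlib

section
/- Let U₁ ⊆ ℝ^{n₁} and U₂ ⊆ ℝ^{n₂} be open boxes (products of open intervals) and f : U₁ × U₂ → ℝ measurable. If for almost every x₁ ∈ U₁ the function f(x₁, ·) agrees almost everywhere with a polynomial in x₂, and for almost every x₂ ∈ U₂ the function f(·, x₂) agrees almost everywhere with a polynomial in x₁, then f agrees almost everywhere with a polynomial in (x₁, x₂). -/
/-!
Countably many degrees cover almost every `x₂`, so on a set `A` of positive measure the slices
`f (·, x₂)` are polynomials of degree `≤ D`. Their coefficients are a fixed linear image of the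
moments `∫ f (x₁, x₂) eₖ(x₁) dx₁` against a basis `eₖ` of these polynomials (the Gram map is
injective because a polynomial vanishing a.e. is zero), so they depend measurably on `x₂`, and
Fubini gives `f = ∑ₖ cₖ(x₂) eₖ(x₁)` a.e. on `U₁ × A`. Finitely many good points `x₁` determine a
polynomial of degree `≤ D`, and at each of them `f (x₁, ·)` is a polynomial; hence every `cₖ`
agrees on `A` with a polynomial, which yields `P`. For almost every `x₁` the polynomials
`f (x₁, ·)` and `P (x₁, ·)` then agree on `A`, a set of positive measure, so they are equal.
-/

open MeasureTheory MvPolynomial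

namespace MvPolynomial

theorem ae_eval_ne_zero {n : ℕ} {p : MvPolynomial (Fin n) ℝ} (hp : p ≠ 0) :
    ∀ᵐ x : Fin n → ℝ, eval x p ≠ 0 := by
  induction n with
  | zero =>
    have hC := eq_C_of_isEmpty p
    refine ae_of_all _ fun x h => hp ?_
    rw [hC, eval_C] at h
    rw [hC, h, map_zero]
  | succ n ih =>
    -- `p (t, y)` is a polynomial in `t` whose leading coefficient is a nonzero polynomial in `y`.
    set F := finSuccEquiv ℝ n p
    have hF : F ≠ 0 := by simpa [F] using hp
    have hslice : ∀ᵐ y : Fin n → ℝ, ∀ᵐ t : ℝ, Polynomial.eval t (F.map (eval y)) ≠ 0 := by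
      filter_upwards [ih (Polynomial.leadingCoeff_ne_zero.2 hF)] with y hy
      have hne : F.map (eval y) ≠ 0 := fun h => hy (by
        rw [Polynomial.leadingCoeff, ← Polynomial.coeff_map, h, Polynomial.coeff_zero])
      exact (Polynomial.finite_setOfPred_isRoot hne).countable.ae_notMem volume
    have hmeas :
        MeasurableSet {q : ℝ × (Fin n → ℝ) | Polynomial.eval q.1 (F.map (eval q.2)) ≠ 0} := by
      simp_rw [F, ← eval_eq_eval_mv_eval']
      exact ((continuous_eval p).comp (by fun_prop)).measurable (measurableSet_singleton 0).compl
    have hprod : ∀ᵐ q : ℝ × (Fin n → ℝ), Polynomial.eval q.1 (F.map (eval q.2)) ≠ 0 := by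
      rw [Measure.volume_eq_prod, Measure.ae_prod_iff_ae_ae hmeas]
      exact (Measure.ae_ae_comm hmeas).2 hslice
    filter_upwards [(volume_preserving_piFinSuccAbove (fun _ : Fin (n + 1) => ℝ) 0)
      |>.quasiMeasurePreserving.ae hprod] with x hx
    simpa [F, ← eval_eq_eval_mv_eval'] using hx

theorem eq_of_ae_eval_eq {n : ℕ} {μ : Measure (Fin n → ℝ)} (hμ : μ ≪ volume) (hμ₀ : μ ≠ 0)
    {p q : MvPolynomial (Fin n) ℝ} (h : ∀ᵐ x ∂μ, eval x p = eval x q) : p = q := by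
  by_contra hpq
  have hfalse : ∀ᵐ x ∂μ, False := by
    filter_upwards [hμ.ae_le (ae_eval_ne_zero (sub_ne_zero.2 hpq)), h] with x hne heq
    exact hne (by rw [map_sub, heq, sub_self])
  exact hμ₀ (ae_eq_bot.1 (Filter.eventually_false_iff_eq_bot.1 hfalse))

theorem exists_eval_eq_eval_sumElim {R σ τ : Type*} [CommSemiring R]
    (P : MvPolynomial (σ ⊕ τ) R) (x : σ → R) :
    ∃ p : MvPolynomial τ R, ∀ y, eval y p = eval (Sum.elim x y) P := by
  refine ⟨bind₁ (Sum.elim (C ∘ x) X) P, fun y => ?_⟩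
  induction P using MvPolynomial.induction_on with
  | C r => simp
  | add p q hp hq => simp [hp, hq]
  | mul_X p i h => cases i <;> simp [h]

theorem exists_measure_pos_setOf_totalDegree_le {R σ Y : Type*} [CommSemiring R]
    [MeasurableSpace Y] {μ : Measure Y} (hμ : μ ≠ 0) {F : Y → MvPolynomial σ R → Prop}
    (h : ∀ᵐ y ∂μ, ∃ p, F y p) :
    ∃ D, 0 < μ {y | ∃ p ∈ restrictTotalDegree σ R D, F y p} := by
  refine exists_measure_pos_of_not_measure_iUnion_null ?_
  have hcover : ∀ᵐ y ∂μ, y ∈ ⋃ D, {y | ∃ p ∈ restrictTotalDegree σ R D, F y p} :=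
    h.mono fun y ⟨p, hp⟩ =>
      Set.mem_iUnion.2 ⟨p.totalDegree, p, (mem_restrictTotalDegree _ _ _).2 le_rfl, hp⟩
  rw [measure_congr (ae_eq_univ.2 (ae_iff.1 hcover))]
  exact Measure.measure_univ_ne_zero.2 hμ

end MvPolynomial

namespace LinearMap

variable {K V α : Type*} [Field K] [AddCommGroup V] [Module K V] (E : V →ₗ[K] α → K)

theorem exists_finset_subset_eq_zero_of_forall_apply_eq_zero [FiniteDimensional K V]
    {G : Set α} (hG : ∀ v, (∀ x ∈ G, E v x = 0) → v = 0) :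
    ∃ s : Finset α, ↑s ⊆ G ∧ ∀ v, (∀ x ∈ s, E v x = 0) → v = 0 := by
  classical
  set φ : α → Module.Dual K V := fun x => (proj x).comp E
  have hspan : Submodule.span K (φ '' G) = ⊤ := by
    refine eq_top_iff.2 fun ψ _ => ?_
    rw [Set.image_eq_range]
    refine FiniteDimensional.mem_span_of_iInf_ker_le_ker fun v hv => ?_
    rw [hG v fun x hx => by simpa [φ] using (Submodule.mem_iInf _).1 hv ⟨x, hx⟩]
    exact zero_mem _
  obtain ⟨t, htG, -, hts, -⟩ := Submodule.exists_finset_span_eq_linearIndepOn K (φ '' G)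
  obtain ⟨s, hsG, rfl⟩ := Finset.subset_set_image_iff.1 htG
  refine ⟨s, hsG, fun v hv => (Module.forall_dual_apply_eq_zero_iff K v).1 fun ψ => ?_⟩
  have hψ : ψ ∈ Submodule.span K (s.image φ : Set (Module.Dual K V)) := by
    rw [hts, hspan]; trivial
  refine (Submodule.span_le (p := ker (Module.Dual.eval K V v))).2 ?_ hψ
  rintro _ hψx
  obtain ⟨x, hx, rfl⟩ := Finset.mem_image.1 hψx
  exact hv x hx

theorem exists_eq_sum_apply_smul_of_forall_apply_eq_zero (s : Finset α)
    (hs : ∀ v, (∀ x ∈ s, E v x = 0) → v = 0) :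
    ∃ w : s → V, ∀ v, v = ∑ x : s, E v x • w x := by
  classical
  set L : V →ₗ[K] s → K := pi fun x => (proj (x : α)).comp E
  obtain ⟨Ψ, hΨ⟩ := L.exists_leftInverse_of_injective <| ker_eq_bot'.2 fun v hv =>
    hs v fun x hx => congrFun hv ⟨x, hx⟩
  refine ⟨fun x => Ψ fun y => if x = y then 1 else 0, fun v => ?_⟩
  conv_lhs => rw [← id_apply (R := K) v, ← hΨ, comp_apply, pi_apply_eq_sum_univ]
  rfl

end LinearMap

theorem MeasureTheory.Measure.ae_ae_restrict_of_forall_mem {X Y : Type*} [MeasurableSpace X]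
    [MeasurableSpace Y] {μ : Measure X} {ν : Measure Y} [SFinite μ] [SFinite ν]
    {p : X × Y → Prop} (hp : MeasurableSet {z | p z}) {s : Set Y}
    (h : ∀ y ∈ s, ∀ᵐ x ∂μ, p (x, y)) : ∀ᵐ x ∂μ, ∀ᵐ y ∂ν.restrict s, p (x, y) := by
  refine Measure.ae_ae_of_ae_prod (ae_iff.2 ?_)
  change μ.prod (ν.restrict s) {z | p z}ᶜ = 0
  rw [Measure.prod_apply_symm hp.compl]
  -- `s` need not be measurable, but the set of good slices is.
  have hslice : ∀ᵐ y ∂ν.restrict s, μ ((fun x => (x, y)) ⁻¹' {z | p z}ᶜ) = 0 :=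
    (ae_restrict_iff (measurable_measure_prodMk_right hp.compl
      (measurableSet_singleton 0))).2 (ae_of_all _ fun y hy => ae_iff.1 (h y hy))
  exact (lintegral_congr_ae hslice).trans lintegral_zero

section MeasurableCoeff

variable {X V : Type*} [MeasurableSpace X] [AddCommGroup V] [Module ℝ V] {μ : Measure X}
  {E : V →ₗ[ℝ] X → ℝ}

theorem eq_zero_of_forall_integral_mul_basis_eq_zero (hE_int : ∀ v w, Integrable (E v * E w) μ)
    (hE_inj : ∀ v, E v =ᵐ[μ] 0 → v = 0) {ι : Type*} [Fintype ι] (b : Module.Basis ι ℝ V) {v : V}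
    (h : ∀ k, ∫ x, E v x * E (b k) x ∂μ = 0) : v = 0 := by
  have hexpand : ∀ x, E v x * E v x = ∑ k, b.repr v k * (E v x * E (b k) x) := fun x => by
    nth_rewrite 2 [← b.sum_repr v]
    simp only [map_sum, map_smul, Finset.sum_apply, Pi.smul_apply, smul_eq_mul, Finset.mul_sum]
    exact Finset.sum_congr rfl fun k _ => by ring
  have hsq : ∫ x, E v x * E v x ∂μ = 0 := by
    simp_rw [hexpand]
    rw [integral_finsetSum _ fun k _ => ?_]
    · simp [integral_const_mul, h]
    · exact (hE_int v (b k)).const_mul _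
  refine hE_inj v ?_
  filter_upwards [(integral_eq_zero_iff_of_nonneg (fun x => mul_self_nonneg _)
    (hE_int v v)).1 hsq] with x hx
  exact mul_self_eq_zero.1 hx

variable {Y : Type*} [MeasurableSpace Y] [FiniteDimensional ℝ V] [SFinite μ]

theorem exists_jointly_measurable_coeff (hE_meas : ∀ v, Measurable (E v))
    (hE_int : ∀ v w, Integrable (E v * E w) μ) (hE_inj : ∀ v, E v =ᵐ[μ] 0 → v = 0)
    {f : X × Y → ℝ} (hf : Measurable f) :
    ∃ C : Y → V, Measurable (fun z : X × Y => E (C z.2) z.1) ∧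
      ∀ y v, (fun x => f (x, y)) =ᵐ[μ] E v → C y = v := by
  let b := Module.finBasis ℝ V
  let M : V →ₗ[ℝ] Fin (Module.finrank ℝ V) → ℝ :=
    { toFun := fun v k => ∫ x, E v x * E (b k) x ∂μ
      map_add' := fun v w => funext fun k => by
        simp only [map_add, Pi.add_apply, add_mul]
        exact integral_add (hE_int v (b k)) (hE_int w (b k))
      map_smul' := fun c v => funext fun k => by
        simp [mul_assoc, integral_const_mul] }
  obtain ⟨Ψ, hΨ⟩ := M.exists_leftInverse_of_injective <| LinearMap.ker_eq_bot'.2 fun v hv =>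
    eq_zero_of_forall_integral_mul_basis_eq_zero hE_int hE_inj b (congrFun hv)
  set m : Y → Fin (Module.finrank ℝ V) → ℝ := fun y k => ∫ x, f (x, y) * E (b k) x ∂μ
  refine ⟨fun y => Ψ (m y), ?_, fun y v hfv => ?_⟩
  · have hm : ∀ k, Measurable fun y => m y k := fun k =>
      (hf.mul ((hE_meas _).comp measurable_fst)).stronglyMeasurable.integral_prod_left'.measurable
    have hsum : ∀ y, E (Ψ (m y)) = ∑ k, m y k • E (Ψ fun j => if k = j then 1 else 0) :=
      fun y => by rw [← LinearMap.comp_apply, LinearMap.pi_apply_eq_sum_univ]; rfl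
    simp_rw [hsum, Finset.sum_apply, Pi.smul_apply, smul_eq_mul]
    exact Finset.measurable_sum _ fun k _ =>
      ((hm k).comp measurable_snd).mul ((hE_meas _).comp measurable_fst)
  · have hMv : m y = M v := funext fun k =>
      integral_congr_ae (hfv.mul (ae_of_all _ fun _ => rfl))
    change Ψ (m y) = v
    rw [hMv, ← LinearMap.comp_apply, hΨ, LinearMap.id_apply]

end MeasurableCoeff

theorem exists_restrict_ae_ae_eq_eval_of_ae_polynomial {n₁ : ℕ} {Y : Type*} [MeasurableSpace Y]
    {μ₁ : Measure (Fin n₁ → ℝ)} {μ₂ : Measure Y} [SFinite μ₁] [SFinite μ₂]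
    (hμ₁ : μ₁ ≪ volume) (hμ₁₀ : μ₁ ≠ 0) (hμ₂₀ : μ₂ ≠ 0)
    (hint : ∀ p : MvPolynomial (Fin n₁) ℝ, Integrable (fun x => eval x p) μ₁)
    {f : (Fin n₁ → ℝ) × Y → ℝ} (hf : Measurable f)
    (h₂ : ∀ᵐ y ∂μ₂, ∃ p : MvPolynomial (Fin n₁) ℝ, ∀ᵐ x ∂μ₁, f (x, y) = eval x p) :
    ∃ (A : Set Y) (D : ℕ) (C : Y → restrictTotalDegree (Fin n₁) ℝ D), μ₂ A ≠ 0 ∧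
      ∀ᵐ x ∂μ₁, ∀ᵐ y ∂μ₂.restrict A, f (x, y) = eval x (C y : MvPolynomial (Fin n₁) ℝ) := by
  obtain ⟨D, hD⟩ := exists_measure_pos_setOf_totalDegree_le hμ₂₀ h₂
  set V := restrictTotalDegree (Fin n₁) ℝ D
  let E : V →ₗ[ℝ] (Fin n₁ → ℝ) → ℝ := (evalₗ ℝ (Fin n₁)).comp V.subtype
  have hE : ∀ v x, E v x = eval x (v : MvPolynomial (Fin n₁) ℝ) := fun _ _ => rfl
  have hE_inj : ∀ v, E v =ᵐ[μ₁] 0 → v = 0 := fun v hv =>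
    Subtype.ext (eq_of_ae_eval_eq hμ₁ hμ₁₀ (hv.mono fun x hx => by simpa [hE] using hx))
  obtain ⟨C, hCmeas, hC⟩ := exists_jointly_measurable_coeff (E := E)
    (fun v => (continuous_eval _).measurable)
    (fun v w => (hint (v * w)).congr (ae_of_all _ fun x => by simp [hE])) hE_inj hf
  refine ⟨_, D, C, hD.ne', Measure.ae_ae_restrict_of_forall_mem (measurableSet_eq_fun hf hCmeas)
    fun y ⟨p, hp, hfp⟩ => ?_⟩
  change ∀ᵐ x ∂μ₁, f (x, y) = E (C y) x
  rw [hC y ⟨p, hp⟩ hfp]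
  exact hfp

theorem exists_eval_sumElim_eq_of_ae_ae_eq_eval {n₁ : ℕ} {τ : Type*}
    {μ₁ : Measure (Fin n₁ → ℝ)} {ν : Measure (τ → ℝ)} (hμ₁ : μ₁ ≪ volume) (hμ₁₀ : μ₁ ≠ 0)
    {V : Submodule ℝ (MvPolynomial (Fin n₁) ℝ)} [FiniteDimensional ℝ V]
    {f : (Fin n₁ → ℝ) × (τ → ℝ) → ℝ} {C : (τ → ℝ) → V}
    (hfC : ∀ᵐ x ∂μ₁, ∀ᵐ y ∂ν, f (x, y) = eval x (C y : MvPolynomial (Fin n₁) ℝ))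
    (h₁ : ∀ᵐ x ∂μ₁, ∃ q : MvPolynomial τ ℝ, ∀ᵐ y ∂ν, f (x, y) = eval y q) :
    ∃ P : MvPolynomial (Fin n₁ ⊕ τ) ℝ,
      ∀ᵐ y ∂ν, ∀ x, eval x (C y : MvPolynomial (Fin n₁) ℝ) = eval (Sum.elim x y) P := by
  let E : V →ₗ[ℝ] (Fin n₁ → ℝ) → ℝ := (evalₗ ℝ (Fin n₁)).comp V.subtype
  have hE : ∀ v x, E v x = eval x (v : MvPolynomial (Fin n₁) ℝ) := fun _ _ => rfl
  set G := {x | ∃ q : MvPolynomial τ ℝ, ∀ᵐ y ∂ν, E (C y) x = eval y q}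
  have hG : ∀ᵐ x ∂μ₁, x ∈ G := by
    filter_upwards [h₁, hfC] with x ⟨q, hq⟩ hfCx
    exact ⟨q, by filter_upwards [hq, hfCx] with y h1 h2; rw [hE, ← h2, h1]⟩
  obtain ⟨s, hsG, hs⟩ := E.exists_finset_subset_eq_zero_of_forall_apply_eq_zero fun v hv =>
    Subtype.ext (eq_of_ae_eval_eq hμ₁ hμ₁₀ (hG.mono fun x hx => by simpa [hE] using hv x hx))
  obtain ⟨w, hw⟩ := E.exists_eq_sum_apply_smul_of_forall_apply_eq_zero s hs
  choose q hq using fun x : s => hsG x.2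
  refine ⟨∑ x : s, rename Sum.inl (w x : MvPolynomial (Fin n₁) ℝ) * rename Sum.inr (q x), ?_⟩
  filter_upwards [ae_all_iff.2 hq] with y hy x'
  rw [← hE, hw (C y)]
  simp only [hE, Submodule.coe_sum, Submodule.coe_smul, map_sum, smul_eval, map_mul,
    eval_rename, Sum.elim_comp_inl, Sum.elim_comp_inr]
  exact Finset.sum_congr rfl fun x _ => by rw [← hE, hy x, mul_comm]

theorem ae_polynomial_of_separately_ae_polynomial_of_integrable {n₁ n₂ : ℕ}
    {μ₁ : Measure (Fin n₁ → ℝ)} {μ₂ : Measure (Fin n₂ → ℝ)} [SFinite μ₁] [SFinite μ₂]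
    (hμ₁ : μ₁ ≪ volume) (hμ₂ : μ₂ ≪ volume)
    (hint : ∀ p : MvPolynomial (Fin n₁) ℝ, Integrable (fun x => eval x p) μ₁)
    {f : (Fin n₁ → ℝ) × (Fin n₂ → ℝ) → ℝ} (hf : Measurable f)
    (h₁ : ∀ᵐ x₁ ∂μ₁, ∃ p : MvPolynomial (Fin n₂) ℝ, ∀ᵐ x₂ ∂μ₂, f (x₁, x₂) = eval x₂ p)
    (h₂ : ∀ᵐ x₂ ∂μ₂, ∃ p : MvPolynomial (Fin n₁) ℝ, ∀ᵐ x₁ ∂μ₁, f (x₁, x₂) = eval x₁ p) :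
    ∃ P : MvPolynomial (Fin n₁ ⊕ Fin n₂) ℝ,
      ∀ᵐ z ∂μ₁.prod μ₂, f z = eval (Sum.elim z.1 z.2) P := by
  rcases eq_or_ne μ₁ 0 with rfl | hμ₁₀
  · exact ⟨0, by simp⟩
  rcases eq_or_ne μ₂ 0 with rfl | hμ₂₀
  · exact ⟨0, by simp⟩
  obtain ⟨A, D, C, hA, hfC⟩ :=
    exists_restrict_ae_ae_eq_eval_of_ae_polynomial hμ₁ hμ₁₀ hμ₂₀ hint hf h₂
  have hAμ : μ₂.restrict A ≤ μ₂ := Measure.restrict_le_self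
  obtain ⟨P, hP⟩ := exists_eval_sumElim_eq_of_ae_ae_eq_eval hμ₁ hμ₁₀ hfC
    (h₁.mono fun x ⟨q, hq⟩ => ⟨q, ae_mono hAμ hq⟩)
  have hPmeas : Measurable fun z : (Fin n₁ → ℝ) × (Fin n₂ → ℝ) => eval (Sum.elim z.1 z.2) P :=
    ((continuous_eval P).comp (continuous_pi fun j => j.casesOn
      (fun i => (continuous_apply i).comp continuous_fst)
      (fun i => (continuous_apply i).comp continuous_snd))).measurable
  refine ⟨P, (Measure.ae_prod_iff_ae_ae (measurableSet_eq_fun hf hPmeas)).2 ?_⟩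
  filter_upwards [h₁, hfC] with x₁ ⟨q, hq⟩ hfCx
  obtain ⟨p, hp⟩ := exists_eval_eq_eval_sumElim P x₁
  have hqp : q = p := eq_of_ae_eval_eq ((Measure.absolutelyContinuous_of_le hAμ).trans hμ₂)
    (by rwa [Ne, Measure.restrict_eq_zero]) (by
      filter_upwards [ae_mono hAμ hq, hfCx, hP] with x₂ h1 h2 h3
      rw [hp, ← h3, ← h2, h1])
  filter_upwards [hq] with x₂ hx₂
  rw [hx₂, hqp, hp]

theorem ae_polynomial_of_separately_ae_polynomial_general
    (n₁ n₂ : ℕ) (a₁ b₁ : Fin n₁ → ℝ)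
    (U₁ : Set (Fin n₁ → ℝ)) (U₂ : Set (Fin n₂ → ℝ))
    (hU₁ : U₁ = Set.pi Set.univ fun i => Set.Ioo (a₁ i) (b₁ i))
    (f : (Fin n₁ → ℝ) × (Fin n₂ → ℝ) → ℝ)
    (hf : Measurable f)
    (h₁ : ∀ᵐ x₁ ∂(volume.restrict U₁), ∃ p : MvPolynomial (Fin n₂) ℝ,
      ∀ᵐ x₂ ∂(volume.restrict U₂), f (x₁, x₂) = MvPolynomial.eval x₂ p)
    (h₂ : ∀ᵐ x₂ ∂(volume.restrict U₂), ∃ p : MvPolynomial (Fin n₁) ℝ,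
      ∀ᵐ x₁ ∂(volume.restrict U₁), f (x₁, x₂) = MvPolynomial.eval x₁ p) :
    ∃ P : MvPolynomial (Fin n₁ ⊕ Fin n₂) ℝ,
      ∀ᵐ z ∂((volume.restrict U₁).prod (volume.restrict U₂)),
        f z = MvPolynomial.eval (Sum.elim z.1 z.2) P := by
  have hU₁_Icc : U₁ ⊆ Set.Icc a₁ b₁ := by
    rw [hU₁, ← Set.pi_univ_Icc]
    exact Set.pi_mono fun i _ => Set.Ioo_subset_Icc_self
  exact ae_polynomial_of_separately_ae_polynomial_of_integrable
    (Measure.absolutelyContinuous_of_le Measure.restrict_le_self)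
    (Measure.absolutelyContinuous_of_le Measure.restrict_le_self)
    (fun p => ((continuous_eval p).integrableOn_Icc).mono_set hU₁_Icc) hf h₁ h₂

/-- If a measurable function on a product of open boxes agrees a.e. with a polynomial
in each variable separately (the other being fixed), then it agrees a.e. with a
polynomial in both variables jointly. -/
theorem ae_polynomial_of_separately_ae_polynomial
    (n₁ n₂ : ℕ) (a₁ b₁ : Fin n₁ → ℝ) (a₂ b₂ : Fin n₂ → ℝ)
    (U₁ : Set (Fin n₁ → ℝ)) (U₂ : Set (Fin n₂ → ℝ))
    (hU₁ : U₁ = Set.pi Set.univ fun i => Set.Ioo (a₁ i) (b₁ i))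
    (hU₂ : U₂ = Set.pi Set.univ fun i => Set.Ioo (a₂ i) (b₂ i))
    (f : (Fin n₁ → ℝ) × (Fin n₂ → ℝ) → ℝ)
    (hf : Measurable f)
    (h₁ : ∀ᵐ x₁ ∂(volume.restrict U₁), ∃ p : MvPolynomial (Fin n₂) ℝ,
      ∀ᵐ x₂ ∂(volume.restrict U₂), f (x₁, x₂) = MvPolynomial.eval x₂ p)
    (h₂ : ∀ᵐ x₂ ∂(volume.restrict U₂), ∃ p : MvPolynomial (Fin n₁) ℝ,
      ∀ᵐ x₁ ∂(volume.restrict U₁), f (x₁, x₂) = MvPolynomial.eval x₁ p) :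
    ∃ P : MvPolynomial (Fin n₁ ⊕ Fin n₂) ℝ,
      ∀ᵐ z ∂((volume.restrict U₁).prod (volume.restrict U₂)),
        f z = MvPolynomial.eval (Sum.elim z.1 z.2) P :=
  ae_polynomial_of_separately_ae_polynomial_general n₁ n₂ a₁ b₁ U₁ U₂ hU₁ f hf h₁ h₂
end

section
/- Let f : U₁ × I → ℝ where U₁ ⊆ ℝⁿ is an open box and I ⊆ ℝ an interval. Suppose there is N such that for a.e. x₂ ∈ I, f(·, x₂) agrees a.e. with a polynomial of degree < N in x₁, and for a.e. x₁, f(x₁, ·) agrees a.e. with a polynomial of degree < N in x₂. Given N distinct values t₀,…,t_{N-1} ∈ I, one can solve the Vandermonde linear system to conclude that the coefficient functions dₙ(x₁) in the expansion f(x₁,x₂) = Σ_{n<N} dₙ(x₁) x₂ⁿ are a.e. equal to polynomials in x₁. -/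
/-!
Pairing `f(x₁, ·)` with the monomials `y ^ k` on `I` gives `M d(x₁) = (∫_I f(x₁, y) y ^ k dy)_k`,
where `M` is the moment matrix of `I`, invertible as a Gram matrix. Hence the coefficients `dₗ`
are a.e. measurable, and Fubini lets us exchange the two a.e. quantifiers. Then for a.e. `x₂`
the function `x₁ ↦ ∑ₗ dₗ(x₁) x₂ ^ l` is a.e. a polynomial; a co-null subset of an interval is
infinite, so we can pick `N` distinct such `x₂`, and inverting their Vandermonde matrix writes
each `dₘ` as a linear combination of polynomials.
-/

open MeasureTheory Matrix

theorem Set.Infinite.exists_injective_fin {α : Type*} {S : Set α} (hS : S.Infinite) (N : ℕ) :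
    ∃ s : Fin N → α, Function.Injective s ∧ ∀ j, s j ∈ S :=
  ⟨fun j => Fin.valEmbedding.trans (hS.natEmbedding S) j,
    Subtype.val_injective.comp (Fin.valEmbedding.trans (hS.natEmbedding S)).injective,
    fun j => (Fin.valEmbedding.trans (hS.natEmbedding S) j).2⟩

theorem MeasureTheory.infinite_of_ae_mem {α : Type*} [MeasurableSpace α] {μ : Measure α}
    [NullSingletonClass μ] (hμ : μ ≠ 0) {S : Set α} (h : ∀ᵐ y ∂μ, y ∈ S) : S.Infinite := by
  intro hfin
  have := ae_neBot.2 hμ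
  obtain ⟨y, hyS, hyS'⟩ := (h.and (hfin.countable.ae_notMem μ)).exists
  exact hyS' hyS

/-- The Gram matrix of the monomials `1, y, …, y ^ (N - 1)` in `L²(μ)`. -/
noncomputable def momentMatrix (μ : Measure ℝ) (N : ℕ) : Matrix (Fin N) (Fin N) ℝ :=
  Matrix.of fun k l => ∫ y, y ^ ((k : ℕ) + l) ∂μ

section momentMatrix

variable {μ : Measure ℝ} {N : ℕ}

theorem momentMatrix_mulVec (hint : ∀ j : ℕ, Integrable (fun y => y ^ j) μ) (v : Fin N → ℝ)
    (k : Fin N) :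
    (momentMatrix μ N *ᵥ v) k = ∫ y, (∑ l, v l * y ^ (l : ℕ)) * y ^ (k : ℕ) ∂μ := by
  simp only [Finset.sum_mul, mul_assoc, ← pow_add]
  rw [integral_finsetSum _ fun l _ => (hint _).const_mul (v l)]
  simp only [integral_const_mul, mulVec, dotProduct, momentMatrix, of_apply]
  exact Finset.sum_congr rfl fun l _ => by rw [add_comm, mul_comm]

theorem momentMatrix_det_ne_zero [NullSingletonClass μ] (hμ : μ ≠ 0)
    (hint : ∀ j : ℕ, Integrable (fun y => y ^ j) μ) : (momentMatrix μ N).det ≠ 0 := by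
  intro hdet
  obtain ⟨v, hv, hMv⟩ := exists_mulVec_eq_zero_iff.2 hdet
  set p : ℝ → ℝ := fun y => ∑ l, v l * y ^ (l : ℕ)
  have hp_int : ∀ k : ℕ, Integrable (fun y => p y * y ^ k) μ := fun k => by
    simp only [p, Finset.sum_mul, mul_assoc, ← pow_add]
    exact integrable_finsetSum _ fun l _ => (hint _).const_mul _
  have hp_sq : ∀ y, p y ^ 2 = ∑ k, v k * (p y * y ^ (k : ℕ)) := fun y => by
    simp only [sq, Finset.mul_sum, p]
    exact Finset.sum_congr rfl fun k _ => by ring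
  have hp_sq_int : Integrable (fun y => p y ^ 2) μ := by
    simp only [hp_sq]
    exact integrable_finsetSum _ fun k _ => (hp_int k).const_mul _
  have hp_sq_zero : ∫ y, p y ^ 2 ∂μ = 0 := by
    calc ∫ y, p y ^ 2 ∂μ = v ⬝ᵥ (momentMatrix μ N *ᵥ v) := by
          simp only [hp_sq, dotProduct, momentMatrix_mulVec hint, ← integral_const_mul]
          exact integral_finsetSum _ fun k _ => (hp_int k).const_mul _
      _ = 0 := by rw [hMv, dotProduct_zero]
  have hp_ae : ∀ᵐ y ∂μ, y ∈ {y | p y = 0} := by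
    filter_upwards [(integral_eq_zero_iff_of_nonneg (fun y => sq_nonneg (p y)) hp_sq_int).1
      hp_sq_zero] with y hy
    exact pow_eq_zero_iff two_ne_zero |>.1 hy
  obtain ⟨s, hs, hsp⟩ := (infinite_of_ae_mem hμ hp_ae).exists_injective_fin N
  exact hv (eq_zero_of_forall_index_sum_mul_pow_eq_zero hs hsp)

end momentMatrix

theorem aemeasurable_coeff_of_ae_eq_sum_mul_pow {α : Type*} [MeasurableSpace α]
    {μ : Measure α} {ν : Measure ℝ} [SFinite ν] [NullSingletonClass ν] (hν : ν ≠ 0)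
    (hint : ∀ j : ℕ, Integrable (fun y => y ^ j) ν) {N : ℕ} {f : α × ℝ → ℝ}
    (hf : Measurable f) {d : Fin N → α → ℝ}
    (hd : ∀ᵐ x ∂μ, ∀ᵐ y ∂ν, f (x, y) = ∑ l, d l x * y ^ (l : ℕ)) (l : Fin N) :
    AEMeasurable (d l) μ := by
  set M := momentMatrix ν N
  set F : α → Fin N → ℝ := fun x k => ∫ y, f (x, y) * y ^ (k : ℕ) ∂ν
  have hF : ∀ k, Measurable fun x => F x k := fun k =>
    (hf.mul (measurable_snd.pow_const _)).stronglyMeasurable.integral_prod_right'.measurable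
  have hMd : ∀ᵐ x ∂μ, M *ᵥ (fun l => d l x) = F x := by
    filter_upwards [hd] with x hx
    funext k
    rw [momentMatrix_mulVec hint]
    exact integral_congr_ae (by filter_upwards [hx] with y hy; rw [hy])
  have hdet : IsUnit M.det := isUnit_iff_ne_zero.2 (momentMatrix_det_ne_zero hν hint)
  refine ⟨fun x => (M⁻¹ *ᵥ F x) l, ?_, ?_⟩
  · simp only [mulVec, dotProduct]
    exact Finset.measurable_sum _ fun k _ => (hF k).const_mul _
  · filter_upwards [hMd] with x hx
    rw [← hx, mulVec_mulVec, nonsing_inv_mul _ hdet, one_mulVec]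

theorem exists_ae_eq_eval_of_infinite {σ K : Type*} [Field K] [MeasurableSpace (σ → K)]
    {μ : Measure (σ → K)} {N : ℕ} {c : Fin N → (σ → K) → K}
    (hS : {y | ∃ q : MvPolynomial σ K,
      ∀ᵐ x ∂μ, ∑ l, c l x * y ^ (l : ℕ) = MvPolynomial.eval x q}.Infinite) (m : Fin N) :
    ∃ p : MvPolynomial σ K, ∀ᵐ x ∂μ, c m x = MvPolynomial.eval x p := by
  obtain ⟨s, hs, hsS⟩ := hS.exists_injective_fin N
  choose q hq using hsS
  set V := vandermonde s
  have hdet : IsUnit V.det := isUnit_iff_ne_zero.2 (det_vandermonde_ne_zero_iff.2 hs)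
  refine ⟨∑ j, MvPolynomial.C (V⁻¹ m j) * q j, ?_⟩
  filter_upwards [ae_all_iff.2 hq] with x hx
  have hVc : V *ᵥ (fun l => c l x) = fun j => MvPolynomial.eval x (q j) := by
    funext j
    rw [← hx j]
    simp only [mulVec, dotProduct, V, vandermonde_apply]
    exact Finset.sum_congr rfl fun l _ => mul_comm _ _
  have hc : (fun l => c l x) = V⁻¹ *ᵥ fun j => MvPolynomial.eval x (q j) := by
    rw [← hVc, mulVec_mulVec, nonsing_inv_mul _ hdet, one_mulVec]
  simp only [congrFun hc m, mulVec, dotProduct, map_sum, map_mul, MvPolynomial.eval_C]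

theorem coefficients_ae_polynomial_of_vandermonde_general
    (n N : ℕ) (cI dI : ℝ)
    (U₁ : Set (Fin n → ℝ)) (I : Set ℝ)
    (hI : I = Set.Ioo cI dI)
    (f : (Fin n → ℝ) × ℝ → ℝ) (hf : Measurable f)
    (t : Fin N → ℝ) (htI : ∀ i, t i ∈ I)
    (h₂ : ∀ᵐ x₂ ∂(volume.restrict I), ∃ p : MvPolynomial (Fin n) ℝ,
      p.totalDegree < N ∧
      ∀ᵐ x₁ ∂(volume.restrict U₁), f (x₁, x₂) = MvPolynomial.eval x₁ p)
    (d : Fin N → (Fin n → ℝ) → ℝ)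
    (hd : ∀ᵐ x₁ ∂(volume.restrict U₁), ∀ᵐ x₂ ∂(volume.restrict I),
      f (x₁, x₂) = ∑ m : Fin N, d m x₁ * x₂ ^ (m : ℕ)) :
    ∀ m : Fin N, ∃ p : MvPolynomial (Fin n) ℝ,
      ∀ᵐ x₁ ∂(volume.restrict U₁), d m x₁ = MvPolynomial.eval x₁ p := by
  intro m
  have hν : volume.restrict I ≠ 0 := by
    have hm : t m ∈ Set.Ioo cI dI := hI ▸ htI m
    simpa [hI, Measure.restrict_eq_zero] using hm.1.trans hm.2
  have hint (j : ℕ) : IntegrableOn (fun y : ℝ => y ^ j) I :=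
    hI ▸ (continuous_pow j).integrableOn_Icc.mono_set Set.Ioo_subset_Icc_self
  have hd_meas := aemeasurable_coeff_of_ae_eq_sum_mul_pow hν hint hf hd
  set c := fun l => (hd_meas l).mk
  have hdc : ∀ᵐ x ∂(volume.restrict U₁), ∀ l, d l x = c l x :=
    ae_all_iff.2 fun l => (hd_meas l).ae_eq_mk
  have hfc : ∀ᵐ y ∂(volume.restrict I), ∀ᵐ x ∂(volume.restrict U₁),
      f (x, y) = ∑ l, c l x * y ^ (l : ℕ) := by
    refine (Measure.ae_ae_comm (measurableSet_eq_fun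
      (f := fun z : (Fin n → ℝ) × ℝ => f (z.1, z.2)) hf ?_)).1 ?_
    · exact Finset.measurable_sum _ fun l _ =>
        ((hd_meas l).measurable_mk.comp measurable_fst).mul (measurable_snd.pow_const _)
    · filter_upwards [hd, hdc] with x hx hxc
      simpa only [hxc] using hx
  have hgood : ∀ᵐ y ∂(volume.restrict I), y ∈ {y | ∃ q : MvPolynomial (Fin n) ℝ,
      ∀ᵐ x ∂(volume.restrict U₁), ∑ l, c l x * y ^ (l : ℕ) = MvPolynomial.eval x q} := by
    filter_upwards [hfc, h₂] with y hy hq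
    obtain ⟨q, -, hq⟩ := hq
    exact ⟨q, by filter_upwards [hy, hq] with x h h'; rw [← h, h']⟩
  obtain ⟨p, hp⟩ := exists_ae_eq_eval_of_infinite (infinite_of_ae_mem hν hgood) m
  exact ⟨p, by filter_upwards [hdc, hp] with x hx hx'; rw [hx, hx']⟩

/-- Solving the Vandermonde system: if `f` on `U₁ × I` is a.e. polynomial of degree `< N`
in each variable separately, and `f(x₁,x₂) = Σ_{n<N} dₙ(x₁) x₂ⁿ` a.e., then given `N`
distinct nodes in `I`, the coefficient functions `dₙ` agree a.e. with polynomials. -/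
theorem coefficients_ae_polynomial_of_vandermonde
    (n N : ℕ) (a₁ b₁ : Fin n → ℝ) (cI dI : ℝ)
    (U₁ : Set (Fin n → ℝ)) (I : Set ℝ)
    (hU₁ : U₁ = Set.pi Set.univ fun i => Set.Ioo (a₁ i) (b₁ i))
    (hI : I = Set.Ioo cI dI)
    (f : (Fin n → ℝ) × ℝ → ℝ) (hf : Measurable f)
    (t : Fin N → ℝ) (ht : Function.Injective t) (htI : ∀ i, t i ∈ I)
    (h₁ : ∀ᵐ x₁ ∂(volume.restrict U₁), ∃ p : Polynomial ℝ, p.natDegree < N ∧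
      ∀ᵐ x₂ ∂(volume.restrict I), f (x₁, x₂) = p.eval x₂)
    (h₂ : ∀ᵐ x₂ ∂(volume.restrict I), ∃ p : MvPolynomial (Fin n) ℝ,
      p.totalDegree < N ∧
      ∀ᵐ x₁ ∂(volume.restrict U₁), f (x₁, x₂) = MvPolynomial.eval x₁ p)
    (d : Fin N → (Fin n → ℝ) → ℝ)
    (hd : ∀ᵐ x₁ ∂(volume.restrict U₁), ∀ᵐ x₂ ∂(volume.restrict I),
      f (x₁, x₂) = ∑ m : Fin N, d m x₁ * x₂ ^ (m : ℕ)) :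
    ∀ m : Fin N, ∃ p : MvPolynomial (Fin n) ℝ,
      ∀ᵐ x₁ ∂(volume.restrict U₁), d m x₁ = MvPolynomial.eval x₁ p :=
  coefficients_ae_polynomial_of_vandermonde_general n N cI dI U₁ I hI f hf t htI h₂ d hd
end

section
/- In a polarized variation of Hodge structure, for smooth sections e, e' of H^{p,q} one has, with respect to the positive-definite Hodge metric, ⟨Ω_{H^{p,q}} e, e'⟩ = ⟨σ_p e, σ_p e'⟩ + ⟨σ_{p+1}† e, σ_{p+1}† e'⟩. In particular, the bottom Hodge bundle H^{0,w} has negative curvature. -/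
/-!
Moving each factor of `Ω = σ_{p+1} σ†_{p+1} − σ†_p σ_p` across the metric with the adjunction
relation (whose signs `(−1)^q`, `(−1)^{q+1}` combine into a single minus) turns the curvature into
the Gram identity `h Ω = σ_pᴴ h σ_p − σ†ᴴ h σ†`. When `σ_p` vanishes only the second term survives,
and it is negative semidefinite because the Hodge metric is positive definite.
-/

open MeasureTheory Matrix
open scoped ComplexOrder

noncomputable section

/-- The hermitian pairing of the metric matrix `M`. -/
def ip {n : ℕ} (M : Matrix (Fin n) (Fin n) ℂ) (a b : Fin n → ℂ) : ℂ :=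
  dotProduct (star b) (M.mulVec a)

theorem eq_neg_of_neg_one_pow_smul_eq {R M : Type*} [Ring R] [AddCommGroup M] [Module R M]
    {q : ℕ} {x y : M} (h : ((-1 : R) ^ q) • x = ((-1 : R) ^ (q + 1)) • y) : x = -y := by
  have hsq : (-1 : R) ^ q * (-1) ^ q = 1 := by
    rw [← pow_add, ← two_mul, pow_mul, neg_one_sq, one_pow]
  simpa [smul_smul, pow_succ, ← mul_assoc, hsq] using congrArg (((-1 : R) ^ q) • ·) h

theorem mul_curvature_eq_gram_sub_gram {α l m n : Type*} [Ring α] [StarRing α]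
    [Fintype l] [Fintype m] [Fintype n]
    {H₀ : Matrix l l α} {H₁ : Matrix m m α} {H₂ : Matrix n n α}
    (hH₁ : H₁.IsHermitian) (hH₂ : H₂.IsHermitian)
    {S₀ : Matrix l m α} {D₀ : Matrix m l α} {S₁ : Matrix m n α} {D₁ : Matrix n m α}
    (h₀ : S₀ᴴ * H₀ = -(H₁ * D₀)) (h₁ : S₁ᴴ * H₁ = -(H₂ * D₁)) :
    H₁ * (S₁ * D₁ - D₀ * S₀) = S₀ᴴ * H₀ * S₀ - D₁ᴴ * H₂ * D₁ := by
  have h₀' : H₁ * D₀ = -(S₀ᴴ * H₀) := by rw [h₀, neg_neg]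
  have h₁' : H₁ * S₁ = -(D₁ᴴ * H₂) := by
    simpa [conjTranspose_mul, hH₁.eq, hH₂.eq] using congrArg conjTranspose h₁
  rw [Matrix.mul_sub, ← Matrix.mul_assoc, ← Matrix.mul_assoc, h₀', h₁', Matrix.neg_mul,
    Matrix.neg_mul, neg_sub_neg]

section Pairing

variable {m n : ℕ}

theorem ip_mulVec (M A : Matrix (Fin n) (Fin n) ℂ) (a b : Fin n → ℂ) :
    ip M (A *ᵥ a) b = ip (M * A) a b := by
  simp only [ip, mulVec_mulVec]

theorem ip_mulVec_mulVec (M : Matrix (Fin n) (Fin n) ℂ) (A : Matrix (Fin n) (Fin m) ℂ)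
    (a b : Fin m → ℂ) : ip M (A *ᵥ a) (A *ᵥ b) = ip (Aᴴ * M * A) a b := by
  simp only [ip, star_mulVec, mulVec_mulVec, dotProduct_mulVec, vecMul_vecMul, Matrix.mul_assoc]

theorem sub_ip (M N : Matrix (Fin n) (Fin n) ℂ) (a b : Fin n → ℂ) :
    ip (M - N) a b = ip M a b - ip N a b := by
  simp only [ip, sub_mulVec, dotProduct_sub]

theorem ip_zero_zero (M : Matrix (Fin n) (Fin n) ℂ) : ip M 0 0 = 0 := by
  simp [ip]

theorem Matrix.PosSemidef.ip_self_nonneg {M : Matrix (Fin n) (Fin n) ℂ} (hM : M.PosSemidef)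
    (a : Fin n → ℂ) : 0 ≤ ip M a a :=
  hM.dotProduct_mulVec_nonneg a

end Pairing

theorem hodge_curvature_pairing_and_bottom_negativity_general
    (d : ℕ → ℕ) (p : ℕ)
    (h : ∀ q : ℕ, ℂ → Matrix (Fin (d q)) (Fin (d q)) ℂ)
    (hpos : ∀ q z, (h q z).PosDef)
    (s : ∀ q : ℕ, ℂ → Matrix (Fin (d q)) (Fin (d (q+1))) ℂ)
    (sd : ∀ q : ℕ, ℂ → Matrix (Fin (d (q+1))) (Fin (d q)) ℂ)
    -- `σ†` is the adjoint of `σ` for the indefinite metric `⟨·,·⟩ᵢ = (−1)^q ⟨·,·⟩`: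
    (hadj : ∀ q : ℕ, ∀ z : ℂ, ((-1:ℂ)^q) • ((s q z)ᴴ * h q z)
        = ((-1:ℂ)^(q+1)) • (h (q+1) z * sd q z))
    -- the curvature of the Hodge bundle `H^{p+1,q}`:
    (Ω : ℂ → Matrix (Fin (d (p+1))) (Fin (d (p+1))) ℂ)
    (hΩ : ∀ z, Ω z = s (p+1) z * sd (p+1) z - sd p z * s p z) :
    (∀ z : ℂ, ∀ e e' : Fin (d (p+1)) → ℂ,
      ip (h (p+1) z) ((Ω z).mulVec e) e'
        = ip (h p z) ((s p z).mulVec e) ((s p z).mulVec e')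
          - ip (h (p+2) z) ((sd (p+1) z).mulVec e) ((sd (p+1) z).mulVec e')) ∧
    ((∀ z, s p z = 0) → ∀ z : ℂ, ∀ e : Fin (d (p+1)) → ℂ,
      (ip (h (p+1) z) ((Ω z).mulVec e) e).im = 0 ∧
      (ip (h (p+1) z) ((Ω z).mulVec e) e).re ≤ 0) := by
  have pairing : ∀ z e e', ip (h (p+1) z) ((Ω z).mulVec e) e'
      = ip (h p z) ((s p z).mulVec e) ((s p z).mulVec e')
        - ip (h (p+2) z) ((sd (p+1) z).mulVec e) ((sd (p+1) z).mulVec e') := by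
    intro z e e'
    rw [ip_mulVec, hΩ, mul_curvature_eq_gram_sub_gram (hpos _ z).isHermitian
      (hpos (p+2) z).isHermitian (eq_neg_of_neg_one_pow_smul_eq (hadj p z))
      (eq_neg_of_neg_one_pow_smul_eq (hadj (p+1) z)), sub_ip, ip_mulVec_mulVec, ip_mulVec_mulVec]
  refine ⟨pairing, fun hs z e => ?_⟩
  have hnonneg := (hpos (p+2) z).posSemidef.ip_self_nonneg ((sd (p+1) z) *ᵥ e)
  rw [pairing, hs z, zero_mulVec, ip_zero_zero, zero_sub]
  exact (Complex.nonpos_iff.mp (neg_nonpos.mpr hnonneg)).symm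

/-- In a polarized variation of Hodge structure, for sections `e, e'` of the Hodge
bundle `H^{p+1,q}` (of rank `d (p+1)`, with positive-definite Hodge metric `h (p+1)`,
related to the indefinite polarization metric by `⟨·,·⟩ᵢ = (−1)^p ⟨·,·⟩`), the curvature
`Ω = Ω_{H^{p+1,q}}` satisfies
`⟨Ω e, e'⟩ = ⟨σ_{p+1} e, σ_{p+1} e'⟩ + ⟨σ†_{p+2} e, σ†_{p+2} e'⟩`
(in `(1,1)`-form coefficients: `⟨σe,σe'⟩ − ⟨σ†e,σ†e'⟩`).  In particular the bottom
Hodge bundle `H^{0,w}` (where the outgoing second fundamental form vanishes) has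
negative curvature. -/
theorem hodge_curvature_pairing_and_bottom_negativity
    (d : ℕ → ℕ) (p : ℕ)
    (h : ∀ q : ℕ, ℂ → Matrix (Fin (d q)) (Fin (d q)) ℂ)
    (hherm : ∀ q z, (h q z).IsHermitian) (hpos : ∀ q z, (h q z).PosDef)
    (s : ∀ q : ℕ, ℂ → Matrix (Fin (d q)) (Fin (d (q+1))) ℂ)
    (sd : ∀ q : ℕ, ℂ → Matrix (Fin (d (q+1))) (Fin (d q)) ℂ)
    -- `σ†` is the adjoint of `σ` for the indefinite metric `⟨·,·⟩ᵢ = (−1)^q ⟨·,·⟩`: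
    (hadj : ∀ q : ℕ, ∀ z : ℂ, ((-1:ℂ)^q) • ((s q z)ᴴ * h q z)
        = ((-1:ℂ)^(q+1)) • (h (q+1) z * sd q z))
    -- the curvature of the Hodge bundle `H^{p+1,q}`:
    (Ω : ℂ → Matrix (Fin (d (p+1))) (Fin (d (p+1))) ℂ)
    (hΩ : ∀ z, Ω z = s (p+1) z * sd (p+1) z - sd p z * s p z) :
    (∀ z : ℂ, ∀ e e' : Fin (d (p+1)) → ℂ,
      ip (h (p+1) z) ((Ω z).mulVec e) e'
        = ip (h p z) ((s p z).mulVec e) ((s p z).mulVec e')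
          - ip (h (p+2) z) ((sd (p+1) z).mulVec e) ((sd (p+1) z).mulVec e')) ∧
    ((∀ z, s p z = 0) → ∀ z : ℂ, ∀ e : Fin (d (p+1)) → ℂ,
      (ip (h (p+1) z) ((Ω z).mulVec e) e).im = 0 ∧
      (ip (h (p+1) z) ((Ω z).mulVec e) e).re ≤ 0) :=
  hodge_curvature_pairing_and_bottom_negativity_general d p h hpos s sd hadj Ω hΩ

end
end

section
/- Let g_t be an ergodic measure-preserving flow on (X,μ) and let A be an integrable linear cocycle over the flow on a vector bundle. If φ is a measurable section invariant under the flow (A(t,x)φ(x) = φ(g_t x) a.e.), then φ(x) lies a.e. in the Oseledets subspace of Lyapunov exponent zero. -/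
/-!
Put `F = log ‖φ‖`. The zero set of `φ` is invariant, so by ergodicity either `φ = 0` a.e. or
`φ ≠ 0` a.e.; in the latter case invariance gives `F ∘ T - F = log ‖A φ‖ - log ‖φ‖`, bounded by the
integrable `log ‖A‖ + log ‖A⁻¹‖`. The Birkhoff sums of `F ∘ T - F` telescope to `F ∘ Tⁿ - F`, so by
Birkhoff's ergodic theorem `F (Tⁿ x) / n` tends a.e. to `c = ∫ (F ∘ T - F)`. By Poincaré recurrence
a.e. orbit returns infinitely often to a set `{|F| ≤ M}` of positive measure, along which
`F (Tⁿ x) / n → 0`; hence `c = 0`. The same argument applies to the ergodic map `T⁻¹`.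

Birkhoff's theorem is derived from the maximal ergodic theorem, `∫_{sup_n Sₙ g > 0} g ≥ 0`: if
`∫ g < q`, the event that the Birkhoff sums of `g - q` are unbounded above is invariant and lies in
`{sup_n Sₙ (g - q) > 0}`, so it is null, i.e. `Sₙ g ≤ n q + C(x)` a.e.
-/

open MeasureTheory Filter Topology
open scoped Matrix

section

variable {X : Type*} {T : X → X} {g : X → ℝ}

/-- `birkhoffMax T g N x = max_{k ≤ N} birkhoffSum T g k x`, in the recursive form used in Garsia's
proof of the maximal ergodic theorem. -/
noncomputable def birkhoffMax (T : X → X) (g : X → ℝ) : ℕ → X → ℝ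
  | 0 => 0
  | N + 1 => fun x => max 0 (g x + birkhoffMax T g N (T x))

lemma birkhoffMax_succ (N : ℕ) (x : X) :
    birkhoffMax T g (N + 1) x = max 0 (g x + birkhoffMax T g N (T x)) := rfl

lemma birkhoffMax_nonneg (N : ℕ) (x : X) : 0 ≤ birkhoffMax T g N x := by
  cases N with
  | zero => rfl
  | succ N => exact le_max_left _ _

lemma birkhoffMax_le_succ (N : ℕ) (x : X) : birkhoffMax T g N x ≤ birkhoffMax T g (N + 1) x := by
  induction N generalizing x with
  | zero => exact birkhoffMax_nonneg _ _
  | succ N ih => exact max_le_max le_rfl (by gcongr; exact ih (T x))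

lemma birkhoffSum_le_birkhoffMax {k N : ℕ} (hk : k ≤ N) (x : X) :
    birkhoffSum T g k x ≤ birkhoffMax T g N x := by
  induction N generalizing k x with
  | zero => simp [Nat.le_zero.1 hk, birkhoffMax]
  | succ N ih =>
    cases k with
    | zero => exact birkhoffMax_nonneg _ _
    | succ k =>
      rw [birkhoffSum_succ', birkhoffMax_succ]
      exact le_max_of_le_right (by gcongr; exact ih (by omega) (T x))

lemma exists_birkhoffSum_eq_birkhoffMax (N : ℕ) (x : X) :
    ∃ k, birkhoffSum T g k x = birkhoffMax T g N x := by
  induction N generalizing x with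
  | zero => exact ⟨0, rfl⟩
  | succ N ih =>
    obtain ⟨k, hk⟩ := ih (T x)
    rcases max_choice 0 (g x + birkhoffMax T g N (T x)) with h | h
    · exact ⟨0, by rw [birkhoffMax_succ, h, birkhoffSum_zero]⟩
    · exact ⟨k + 1, by rw [birkhoffMax_succ, h, birkhoffSum_succ', hk]⟩

lemma birkhoffMax_sub_comp_le_indicator (N : ℕ) (x : X) :
    birkhoffMax T g N x - birkhoffMax T g N (T x) ≤
      {y | 0 < birkhoffMax T g N y}.indicator g x := by
  by_cases hpos : 0 < birkhoffMax T g N x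
  · rw [Set.indicator_of_mem (show x ∈ {y | 0 < birkhoffMax T g N y} from hpos)]
    cases N with
    | zero => exact absurd hpos (lt_irrefl 0)
    | succ N =>
      rw [birkhoffMax_succ N x] at hpos ⊢
      rcases max_choice 0 (g x + birkhoffMax T g N (T x)) with h | h <;> rw [h] at hpos ⊢
      · exact absurd hpos (lt_irrefl 0)
      · linarith [birkhoffMax_le_succ (T := T) (g := g) N (T x)]
  · rw [Set.indicator_of_notMem (show x ∉ {y | 0 < birkhoffMax T g N y} from hpos)]
    linarith [birkhoffMax_nonneg (T := T) (g := g) N (T x)]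

lemma birkhoffSum_sub_const (c : ℝ) (n : ℕ) (x : X) :
    birkhoffSum T (fun y => g y - c) n x = birkhoffSum T g n x - n * c := by
  simp [birkhoffSum, Finset.sum_sub_distrib]

lemma bddAbove_range_birkhoffSum_apply_iff (x : X) :
    BddAbove (Set.range fun n => birkhoffSum T g n (T x)) ↔
      BddAbove (Set.range fun n => birkhoffSum T g n x) := by
  simp only [bddAbove_def, Set.forall_mem_range]
  constructor
  · rintro ⟨C, hC⟩
    refine ⟨max 0 (g x + C), fun n => ?_⟩
    cases n with
    | zero => simp
    | succ n => exact le_max_of_le_right (by rw [birkhoffSum_succ']; linarith [hC n])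
  · rintro ⟨C, hC⟩
    refine ⟨C - g x, fun n => ?_⟩
    linarith [hC (n + 1), birkhoffSum_succ' T g n x]

lemma birkhoffSum_comp_sub {G : Type*} [AddCommGroup G] (F : X → G) (n : ℕ) (x : X) :
    birkhoffSum T (fun y => F (T y) - F y) n x = F (T^[n] x) - F x := by
  simpa [birkhoffSum, Function.iterate_succ_apply'] using
    Finset.sum_range_sub (fun k => F (T^[k] x)) n

variable [MeasurableSpace X] {μ : Measure X}

lemma measurable_birkhoffMax (hT : Measurable T) (hg : Measurable g) (N : ℕ) :
    Measurable (birkhoffMax T g N) := by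
  induction N with
  | zero => exact measurable_const
  | succ N ih => exact measurable_const.max (hg.add (ih.comp hT))

lemma integrable_birkhoffMax (hT : MeasurePreserving T μ μ) (hg : Integrable g μ) (N : ℕ) :
    Integrable (birkhoffMax T g N) μ := by
  induction N with
  | zero => exact integrable_zero X ℝ μ
  | succ N ih =>
    refine (hg.add (hT.integrable_comp_of_integrable ih)).pos_part.congr (.of_forall fun x => ?_)
    exact max_comm _ _

lemma setIntegral_birkhoffMax_pos_nonneg (hT : MeasurePreserving T μ μ) (hgm : Measurable g)
    (hg : Integrable g μ) (N : ℕ) :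
    0 ≤ ∫ x in {x | 0 < birkhoffMax T g N x}, g x ∂μ := by
  have hΦm := measurable_birkhoffMax hT.measurable hgm N
  have hΦ := integrable_birkhoffMax hT hg N
  have hΦT : Integrable (fun x => birkhoffMax T g N (T x)) μ := hT.integrable_comp_of_integrable hΦ
  rw [← integral_indicator (measurableSet_lt measurable_const hΦm)]
  calc (0 : ℝ) = ∫ x, (birkhoffMax T g N x - birkhoffMax T g N (T x)) ∂μ := by
        rw [integral_sub hΦ hΦT, ← integral_map hT.measurable.aemeasurable
          (hT.map_eq ▸ hΦm.aestronglyMeasurable), hT.map_eq, sub_self]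
    _ ≤ _ := integral_mono (hΦ.sub hΦT)
        (hg.indicator (measurableSet_lt measurable_const hΦm))
        (birkhoffMax_sub_comp_le_indicator N)

theorem setIntegral_birkhoffSum_pos_nonneg (hT : MeasurePreserving T μ μ) (hgm : Measurable g)
    (hg : Integrable g μ) :
    0 ≤ ∫ x in {x | ∃ n, 0 < birkhoffSum T g n x}, g x ∂μ := by
  set E : ℕ → Set X := fun N => {x | 0 < birkhoffMax T g N x}
  have hEm (N : ℕ) : MeasurableSet (E N) :=
    measurableSet_lt measurable_const (measurable_birkhoffMax hT.measurable hgm N)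
  have hEmono : Monotone E :=
    monotone_nat_of_le_succ fun N x hx => lt_of_lt_of_le hx (birkhoffMax_le_succ N x)
  have hUnion : ⋃ N, E N = {x | ∃ n, 0 < birkhoffSum T g n x} := by
    ext x
    simp only [E, Set.mem_iUnion, Set.mem_ofPred_eq]
    constructor
    · rintro ⟨N, hN⟩
      obtain ⟨k, hk⟩ := exists_birkhoffSum_eq_birkhoffMax (T := T) (g := g) N x
      exact ⟨k, hk ▸ hN⟩
    · rintro ⟨n, hn⟩
      exact ⟨n, hn.trans_le (birkhoffSum_le_birkhoffMax le_rfl x)⟩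
  rw [← hUnion]
  exact ge_of_tendsto' (tendsto_setIntegral_of_monotone hEm hEmono hg.integrableOn)
    (setIntegral_birkhoffMax_pos_nonneg hT hgm hg)

lemma measurable_birkhoffSum (hT : Measurable T) (hg : Measurable g) (n : ℕ) :
    Measurable (birkhoffSum T g n) :=
  Finset.measurable_sum _ fun k _ => hg.comp (hT.iterate k)

theorem Ergodic.ae_bddAbove_birkhoffSum (hT : Ergodic T μ) (hgm : Measurable g)
    (hg : Integrable g μ) (hneg : ∫ x, g x ∂μ < 0) :
    ∀ᵐ x ∂μ, BddAbove (Set.range fun n => birkhoffSum T g n x) := by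
  have hD : MeasurableSet {x | BddAbove (Set.range fun n => birkhoffSum T g n x)} :=
    measurableSet_bddAbove_range (measurable_birkhoffSum hT.measurable hgm)
  have hinv : T ⁻¹' {x | BddAbove (Set.range fun n => birkhoffSum T g n x)} =
      {x | BddAbove (Set.range fun n => birkhoffSum T g n x)} :=
    Set.ext bddAbove_range_birkhoffSum_apply_iff
  refine (hT.toPreErgodic.ae_mem_or_ae_notMem hD hinv).resolve_right fun hunbdd => ?_
  have hpos : ∀ᵐ x ∂μ, x ∈ {x | ∃ n, 0 < birkhoffSum T g n x} := hunbdd.mono fun x hx => by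
    obtain ⟨_, ⟨n, rfl⟩, hn⟩ := not_bddAbove_iff.1 hx 0
    exact ⟨n, hn⟩
  have := setIntegral_birkhoffSum_pos_nonneg hT.toMeasurePreserving hgm hg
  rw [Measure.restrict_eq_self_of_ae_mem hpos] at this
  linarith

theorem Ergodic.ae_eventually_birkhoffSum_div_lt [IsProbabilityMeasure μ] (hT : Ergodic T μ)
    (hgm : Measurable g) (hg : Integrable g μ) {q : ℝ} (hq : ∫ x, g x ∂μ < q) :
    ∀ᵐ x ∂μ, ∀ᶠ n : ℕ in atTop, birkhoffSum T g n x / n < q := by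
  obtain ⟨r, hr, hrq⟩ := exists_between hq
  have hneg : ∫ x, (g x - r) ∂μ < 0 := by
    rw [integral_sub hg (integrable_const r)]
    simpa using hr
  filter_upwards [hT.ae_bddAbove_birkhoffSum (hgm.sub measurable_const)
    (hg.sub (integrable_const r)) hneg] with x ⟨C, hC⟩
  have hlarge : ∀ᶠ n : ℕ in atTop, C < n * (q - r) :=
    (tendsto_natCast_atTop_atTop.atTop_mul_const (sub_pos.2 hrq)).eventually_gt_atTop C
  filter_upwards [hlarge, eventually_gt_atTop 0] with n hn hn0
  have hS : birkhoffSum T g n x - n * r ≤ C := birkhoffSum_sub_const (g := g) r n x ▸ hC ⟨n, rfl⟩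
  rw [div_lt_iff₀ (by positivity)]
  linarith

theorem Ergodic.ae_tendsto_birkhoffSum_div [IsProbabilityMeasure μ] (hT : Ergodic T μ)
    (hgm : Measurable g) (hg : Integrable g μ) :
    ∀ᵐ x ∂μ, Tendsto (fun n : ℕ => birkhoffSum T g n x / n) atTop (𝓝 (∫ x, g x ∂μ)) := by
  have hup : ∀ᵐ x ∂μ, ∀ q : {q : ℚ // ∫ x, g x ∂μ < q},
      ∀ᶠ n : ℕ in atTop, birkhoffSum T g n x / n < q :=
    ae_all_iff.2 fun q => hT.ae_eventually_birkhoffSum_div_lt hgm hg q.2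
  have hlow : ∀ᵐ x ∂μ, ∀ q : {q : ℚ // ∫ x, -g x ∂μ < q},
      ∀ᶠ n : ℕ in atTop, birkhoffSum T (-g) n x / n < q :=
    ae_all_iff.2 fun q => hT.ae_eventually_birkhoffSum_div_lt hgm.neg hg.neg q.2
  filter_upwards [hup, hlow] with x hx hx'
  refine tendsto_order.2 ⟨fun a ha => ?_, fun a ha => ?_⟩
  · obtain ⟨q, haq, hq⟩ := exists_rat_btwn ha
    refine (hx' ⟨-q, by rw [integral_neg]; push_cast; linarith⟩).mono fun n hn => ?_
    rw [birkhoffSum_neg, neg_div] at hn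
    push_cast at hn
    linarith
  · obtain ⟨q, hq, hqa⟩ := exists_rat_btwn ha
    exact (hx ⟨q, hq⟩).mono fun n hn => hn.trans hqa

theorem MeasureTheory.Conservative.eq_zero_of_ae_tendsto_div [NeZero μ] (hT : Conservative T μ)
    {F : X → ℝ} (hF : Measurable F) {c : ℝ}
    (hlim : ∀ᵐ x ∂μ, Tendsto (fun n : ℕ => F (T^[n] x) / n) atTop (𝓝 c)) : c = 0 := by
  obtain ⟨M, hM⟩ : ∃ M : ℕ, 0 < μ {x | |F x| ≤ M} := by
    refine exists_measure_pos_of_not_measure_iUnion_null fun h => NeZero.ne μ ?_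
    rw [← Measure.measure_univ_eq_zero, ← h]
    refine congrArg μ (Set.iUnion_eq_univ_iff.2 fun x => ⟨⌈|F x|⌉₊, ?_⟩).symm
    exact Nat.le_ceil |F x|
  have hE : MeasurableSet {x | |F x| ≤ M} := measurableSet_le hF.abs measurable_const
  have hgood : ∀ᵐ x ∂μ.restrict {x | |F x| ≤ M},
      Tendsto (fun n : ℕ => F (T^[n] x) / n) atTop (𝓝 c) ∧ ∃ᶠ n in atTop, |F (T^[n] x)| ≤ M := by
    refine (ae_restrict_iff' hE).2 ?_
    filter_upwards [hlim, hT.ae_mem_imp_frequently_image_mem hE.nullMeasurableSet] with x h1 h2 hx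
    exact ⟨h1, h2 hx⟩
  have : NeBot (ae (μ.restrict {x | |F x| ≤ M})) := by
    rw [ae_neBot, Ne, Measure.restrict_eq_zero]; exact hM.ne'
  obtain ⟨x, hxlim, hxrec⟩ := hgood.exists
  have habs : |c| ≤ 0 := le_of_tendsto_of_tendsto_of_frequently hxlim.abs
    (tendsto_const_div_atTop_nhds_zero_nat (M : ℝ)) (hxrec.mono fun n hn => by
      rw [abs_div, Nat.abs_cast]; exact div_le_div_of_nonneg_right hn n.cast_nonneg)
  exact abs_nonpos_iff.1 habs

theorem Ergodic.ae_tendsto_div_of_integrable_comp_sub [IsProbabilityMeasure μ]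
    (hT : Ergodic T μ) {F : X → ℝ} (hF : Measurable F)
    (hf : Integrable (fun x => F (T x) - F x) μ) :
    ∀ᵐ x ∂μ, Tendsto (fun n : ℕ => F (T^[n] x) / n) atTop (𝓝 0) := by
  have hlim : ∀ᵐ x ∂μ, Tendsto (fun n : ℕ => F (T^[n] x) / n) atTop
      (𝓝 (∫ x, (F (T x) - F x) ∂μ)) := by
    filter_upwards [hT.ae_tendsto_birkhoffSum_div (g := fun x => F (T x) - F x)
      ((hF.comp hT.measurable).sub hF) hf] with x hx
    have := hx.add (tendsto_const_div_atTop_nhds_zero_nat (F x))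
    rw [add_zero] at this
    refine this.congr fun n => ?_
    rw [birkhoffSum_comp_sub]
    ring
  rwa [hT.conservative.eq_zero_of_ae_tendsto_div hF hlim] at hlim

theorem Ergodic.of_leftInverse {S : X → X} (hT : Ergodic T μ) (hS : MeasurePreserving S μ μ)
    (hST : Function.LeftInverse S T) : Ergodic S μ where
  toMeasurePreserving := hS
  aeconst_set s hs hinv := hT.aeconst_set hs <| by
    nth_rw 1 [← hinv]
    rw [← Set.preimage_comp, hST.comp_eq_id, Set.preimage_id]

end

lemma Matrix.norm_mulVec_le_sum_abs {m n : Type*} [Fintype m] [Fintype n]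
    (M : Matrix m n ℝ) (v : n → ℝ) : ‖M *ᵥ v‖ ≤ (∑ i, ∑ j, |M i j|) * ‖v‖ := by
  refine (pi_norm_le_iff_of_nonneg (by positivity)).2 fun i => ?_
  calc ‖(M *ᵥ v) i‖ = |∑ j, M i j * v j| := rfl
    _ ≤ ∑ j, |M i j| * ‖v‖ := (Finset.abs_sum_le_sum_abs _ _).trans <|
        Finset.sum_le_sum fun j _ => by
          rw [abs_mul]; exact mul_le_mul_of_nonneg_left (norm_le_pi_norm v j) (abs_nonneg _)
    _ ≤ ∑ i, ∑ j, |M i j| * ‖v‖ :=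
        Finset.single_le_sum (f := fun i => ∑ j, |M i j| * ‖v‖)
          (fun i _ => by positivity) (Finset.mem_univ i)
    _ = (∑ i, ∑ j, |M i j|) * ‖v‖ := by simp_rw [Finset.sum_mul]

lemma Real.abs_log_sub_log_le {a b s t : ℝ} (ha : 0 < a) (hb : 0 < b) (hs : 1 ≤ s) (ht : 1 ≤ t)
    (hba : b ≤ s * a) (hab : a ≤ t * b) : |log b - log a| ≤ log s + log t := by
  have h₁ : log b ≤ log s + log a := by
    rw [← log_mul (by positivity) ha.ne']; exact log_le_log hb hba
  have h₂ : log a ≤ log t + log b := by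
    rw [← log_mul (by positivity) hb.ne']; exact log_le_log ha hab
  rw [abs_le]
  constructor <;> linarith [log_nonneg hs, log_nonneg ht]

lemma Matrix.abs_log_norm_mulVec_sub_le {m : Type*} [Fintype m] [DecidableEq m]
    {M : Matrix m m ℝ} (hM : IsUnit M) {v : m → ℝ} (hv : v ≠ 0) :
    |Real.log ‖M *ᵥ v‖ - Real.log ‖v‖| ≤
      Real.log (max (∑ i, ∑ j, |M i j|) 2) + Real.log (max (∑ i, ∑ j, |M⁻¹ i j|) 2) := by
  have hMv : M *ᵥ v ≠ 0 := fun h =>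
    hv (mulVec_injective_iff_isUnit.2 hM (h.trans (mulVec_zero M).symm))
  have hv_eq : M⁻¹ *ᵥ (M *ᵥ v) = v := by
    rw [mulVec_mulVec, nonsing_inv_mul M ((isUnit_iff_isUnit_det M).1 hM), one_mulVec]
  refine Real.abs_log_sub_log_le (norm_pos_iff.2 hv) (norm_pos_iff.2 hMv)
    (by linarith [le_max_right (∑ i, ∑ j, |M i j|) 2])
    (by linarith [le_max_right (∑ i, ∑ j, |M⁻¹ i j|) 2]) ?_ ?_
  · exact (M.norm_mulVec_le_sum_abs v).trans (by gcongr; exact le_max_left _ _)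
  · conv_lhs => rw [← hv_eq]
    exact (M⁻¹.norm_mulVec_le_sum_abs _).trans (by gcongr; exact le_max_left _ _)

theorem invariant_section_has_zero_exponent_general
    {X : Type*} [MeasurableSpace X]
    (μ : Measure X) [IsProbabilityMeasure μ]
    (T : X → X) (hErg : Ergodic T μ)
    (Tinv : X → X) (hTinv : Function.LeftInverse Tinv T ∧ Function.RightInverse Tinv T)
    (hTinvmp : MeasurePreserving Tinv μ μ)
    (d : ℕ) (A : X → Matrix (Fin d) (Fin d) ℝ)
    (hAunit : ∀ x, IsUnit (A x))
    -- integrability of the cocycle: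
    (hint : Integrable (fun x => Real.log (max (∑ i, ∑ j, |A x i j|) 2)) μ)
    (hintinv : Integrable (fun x => Real.log (max (∑ i, ∑ j, |(A x)⁻¹ i j|) 2)) μ)
    (φ : X → Fin d → ℝ) (hφm : Measurable φ)
    -- invariance of the section under the cocycle dynamics:
    (hinv : ∀ᵐ x ∂μ, (A x).mulVec (φ x) = φ (T x)) :
    ∀ᵐ x ∂μ, φ x = 0 ∨
      (Tendsto (fun n : ℕ => Real.log ‖φ (T^[n] x)‖ / n) atTop (nhds 0) ∧
       Tendsto (fun n : ℕ => Real.log ‖φ (Tinv^[n] x)‖ / n) atTop (nhds 0)) := by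
  have hzero_inv : T ⁻¹' (φ ⁻¹' {0}) =ᵐ[μ] φ ⁻¹' {0} :=
    eventuallyEq_set.2 <| hinv.mono fun x hx => by
      simp only [Set.mem_preimage, Set.mem_singleton_iff, ← hx]
      exact (Matrix.mulVec_injective_iff_isUnit.2 (hAunit x)).eq_iff' (Matrix.mulVec_zero _)
  rcases hErg.quasiErgodic.ae_mem_or_ae_notMem₀
    (hφm (measurableSet_singleton 0)).nullMeasurableSet hzero_inv with hzero | hne
  · exact hzero.mono fun x hx => Or.inl hx
  set F : X → ℝ := fun x => Real.log ‖φ x‖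
  have hF : Measurable F := Real.measurable_log.comp hφm.norm
  have hfwd : Integrable (fun x => F (T x) - F x) μ :=
    (hint.add hintinv).mono' ((hF.comp hErg.measurable).sub hF).aestronglyMeasurable <| by
      filter_upwards [hinv, hne] with x hx hx0
      show |Real.log ‖φ (T x)‖ - Real.log ‖φ x‖| ≤ _
      rw [← hx]
      exact Matrix.abs_log_norm_mulVec_sub_le (hAunit x) hx0
  have hbwd : Integrable (fun x => F (Tinv x) - F x) μ :=
    (hTinvmp.integrable_comp_of_integrable hfwd).neg.congr <| .of_forall fun x => by
      simp [hTinv.2 x]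
  filter_upwards [hErg.ae_tendsto_div_of_integrable_comp_sub hF hfwd,
    (hErg.of_leftInverse hTinvmp hTinv.1).ae_tendsto_div_of_integrable_comp_sub hF hbwd]
    with x h₁ h₂ using Or.inr ⟨h₁, h₂⟩

/-- Let `T` be an ergodic measure-preserving transformation of `(X,μ)` and `A` an
integrable invertible linear cocycle over it.  If `φ` is a measurable section invariant
under the dynamics (`A(x) φ(x) = φ(T x)` a.e.), then `φ` lies a.e. in the Oseledets
subspace of Lyapunov exponent zero: the exponential growth rate of `‖φ(Tⁿx)‖` vanishes
(both forwards and backwards). -/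
theorem invariant_section_has_zero_exponent
    {X : Type*} [MeasurableSpace X]
    (μ : Measure X) [IsProbabilityMeasure μ]
    (T : X → X) (hT : MeasurePreserving T μ μ) (hErg : Ergodic T μ)
    (Tinv : X → X) (hTinv : Function.LeftInverse Tinv T ∧ Function.RightInverse Tinv T)
    (hTinvmp : MeasurePreserving Tinv μ μ)
    (d : ℕ) (A : X → Matrix (Fin d) (Fin d) ℝ)
    (hAunit : ∀ x, IsUnit (A x))
    -- integrability of the cocycle:
    (hint : Integrable (fun x => Real.log (max (∑ i, ∑ j, |A x i j|) 2)) μ)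
    (hintinv : Integrable (fun x => Real.log (max (∑ i, ∑ j, |(A x)⁻¹ i j|) 2)) μ)
    (φ : X → Fin d → ℝ) (hφm : Measurable φ)
    -- invariance of the section under the cocycle dynamics:
    (hinv : ∀ᵐ x ∂μ, (A x).mulVec (φ x) = φ (T x)) :
    ∀ᵐ x ∂μ, φ x = 0 ∨
      (Tendsto (fun n : ℕ => Real.log ‖φ (T^[n] x)‖ / n) atTop (nhds 0) ∧
       Tendsto (fun n : ℕ => Real.log ‖φ (Tinv^[n] x)‖ / n) atTop (nhds 0)) :=
  invariant_section_has_zero_exponent_general μ T hErg Tinv hTinv hTinvmp d A hAunit hint hintinv φ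
    hφm hinv
end

section
/- Suppose a measurable projection-valued map π(x,v), equivariant under a flow in the sense π(x,v) = g_t(π(g_{-t}x, dg_{-t}v)), is real-analytic in v with Taylor expansion π(x,v) = Σ_α c_α(x) v^α. If ‖g_t c_α(g_{-t}x)‖ = o(e^{(Λ+ε)t}) along return times to a positive-measure set and ‖dg_{-t}v‖ = o(e^{-ε₁ t}) with ε₁ < 1 − λ₂, then c_α = 0 whenever |α| > Λ/(1−λ₂); hence π(x,·) is a polynomial of degree at most Λ/(1−λ₂). -/
/-!
Group the Taylor expansion of `π(x, ·)` by total degree. Along the line `s ↦ s • v` the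
degree-`N` part `P_N(x, v)` is the `s^N`-coefficient of a one-variable power series, so
equivariance transfers to homogeneous parts: `P_N(x, v) = g_t P_N(g_{-t}x, dg_{-t}v)`. At a return
time `t` the right side has size at most `e^{(Λ+ε)t} ‖dg_{-t}v‖^N ≤ e^{(Λ+ε-Nε₁)t} ‖v‖^N`, and for
`N > Λ/(1-λ₂)` one can choose `ε₁ < 1 - λ₂` and `ε > 0` with `Λ + ε < N ε₁`, so `P_N(x, ·)`
vanishes near `0`. Being homogeneous, it vanishes everywhere, hence so do its coefficients.
-/

open Filter

noncomputable section

/-- An ad-hoc norm on matrices (sum of absolute values of entries). -/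
def mnorm {d : ℕ} (M : Matrix (Fin d) (Fin d) ℝ) : ℝ := ∑ i, ∑ j, |M i j|

open Topology Finset

theorem eq_of_hasSum_pow_smul {𝕜 F : Type*} [NontriviallyNormedField 𝕜] [NormedAddCommGroup F]
    [NormedSpace 𝕜 F] {a b : ℕ → F} {f : 𝕜 → F}
    (ha : ∀ᶠ s in 𝓝 0, HasSum (fun n => s ^ n • a n) (f s))
    (hb : ∀ᶠ s in 𝓝 0, HasSum (fun n => s ^ n • b n) (f s)) : a = b := by
  let p (a : ℕ → F) : FormalMultilinearSeries 𝕜 𝕜 F :=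
    fun n => ContinuousMultilinearMap.mkPiRing 𝕜 (Fin n) (a n)
  have hp (a : ℕ → F) (ha : ∀ᶠ s in 𝓝 0, HasSum (fun n => s ^ n • a n) (f s)) :
      HasFPowerSeriesAt f (p a) 0 :=
    hasFPowerSeriesAt_iff.2 (by simpa [p, FormalMultilinearSeries.coeff] using ha)
  funext n
  simpa [p, FormalMultilinearSeries.coeff] using
    congrArg (·.coeff n) ((hp a ha).eq_formalMultilinearSeries (hp b hb))

section HomogeneousPart

variable {𝕜 ι κ F G : Type*} [Fintype ι]

theorem prod_smul_pow [CommMonoid 𝕜] (a : 𝕜) (v : ι → 𝕜) (α : ι →₀ ℕ) :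
    ∏ i, (a • v) i ^ α i = a ^ α.degree * ∏ i, v i ^ α i := by
  simp [Finsupp.degree_eq_sum, mul_pow, prod_mul_distrib, prod_pow_eq_pow_sum]

variable [DecidableEq ι]

def homogeneousPart [CommSemiring 𝕜] [AddCommMonoid F] [Module 𝕜 F]
    (c : (ι →₀ ℕ) → F) (N : ℕ) (v : ι → 𝕜) : F :=
  ∑ α ∈ finsuppAntidiag univ N, (∏ i, v i ^ α i) • c α

theorem mem_finsuppAntidiag_univ {α : ι →₀ ℕ} {N : ℕ} :
    α ∈ finsuppAntidiag univ N ↔ α.degree = N := by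
  simp [Finsupp.degree_eq_sum]

theorem homogeneousPart_smul [CommSemiring 𝕜] [AddCommMonoid F] [Module 𝕜 F]
    (c : (ι →₀ ℕ) → F) (N : ℕ) (a : 𝕜) (v : ι → 𝕜) :
    homogeneousPart c N (a • v) = a ^ N • homogeneousPart c N v := by
  rw [homogeneousPart, homogeneousPart, smul_sum]
  refine sum_congr rfl fun α hα => ?_
  rw [prod_smul_pow, mem_finsuppAntidiag_univ.1 hα, mul_smul]

theorem hasSum_pow_smul_homogeneousPart [CommSemiring 𝕜] [AddCommMonoid F] [Module 𝕜 F]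
    [TopologicalSpace F] [ContinuousAdd F] [RegularSpace F]
    {c : (ι →₀ ℕ) → F} {s : 𝕜} {v : ι → 𝕜} {P : F}
    (h : HasSum (fun α => (∏ i, (s • v) i ^ α i) • c α) P) :
    HasSum (fun N => s ^ N • homogeneousPart c N v) P := by
  refine ((Equiv.sigmaFiberEquiv Finsupp.degree).hasSum_iff.2 h).sigma fun N => ?_
  let _ : Fintype {α : ι →₀ ℕ // α.degree = N} :=
    Fintype.subtype (finsuppAntidiag univ N) fun _ => mem_finsuppAntidiag_univ
  rw [homogeneousPart, smul_sum, sum_subtype _ fun _ => mem_finsuppAntidiag_univ]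
  refine (hasSum_fintype _).congr_fun fun α => ?_
  simp only [Function.comp_apply, Equiv.sigmaFiberEquiv_apply, prod_smul_pow, α.2, mul_smul]

section Normed

variable [NontriviallyNormedField 𝕜] [NormedAddCommGroup F] [NormedSpace 𝕜 F]
  [NormedAddCommGroup G] [NormedSpace 𝕜 G] [Fintype κ] [DecidableEq κ]

omit [DecidableEq ι] in
theorem norm_prod_pow_le (v : ι → 𝕜) (α : ι →₀ ℕ) :
    ‖∏ i, v i ^ α i‖ ≤ ‖v‖ ^ α.degree := by
  rw [norm_prod, Finsupp.degree_eq_sum, ← prod_pow_eq_pow_sum]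
  gcongr with i
  rw [norm_pow]
  exact pow_le_pow_left₀ (norm_nonneg _) (norm_le_pi_norm v i) _

theorem norm_homogeneousPart_le {c : (ι →₀ ℕ) → F} {N : ℕ} {B : ℝ}
    (hc : ∀ α ∈ finsuppAntidiag (univ : Finset ι) N, ‖c α‖ ≤ B) (v : ι → 𝕜) :
    ‖homogeneousPart c N v‖ ≤ #(finsuppAntidiag (univ : Finset ι) N) * (B * ‖v‖ ^ N) := by
  rw [← nsmul_eq_mul]
  refine (norm_sum_le _ _).trans (sum_le_card_nsmul _ _ _ fun α hα => ?_)
  rw [norm_smul, mul_comm, ← mem_finsuppAntidiag_univ.1 hα]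
  exact mul_le_mul (hc α hα) (norm_prod_pow_le v α) (norm_nonneg _)
    ((norm_nonneg _).trans (hc α hα))

theorem eventually_norm_smul_lt {E : Type*} [SeminormedAddCommGroup E] [NormedSpace 𝕜 E]
    {v : E} {r : ℝ} (hv : ‖v‖ < r) : ∀ᶠ s in 𝓝 (0 : 𝕜), ‖s • v‖ < r := by
  have : Continuous fun s : 𝕜 => ‖s • v‖ := by fun_prop
  exact this.continuousAt.eventually_lt continuousAt_const
    (by simpa using (norm_nonneg v).trans_lt hv)

theorem homogeneousPart_eq_of_hasSum {c : (ι →₀ ℕ) → F} {c' : (κ →₀ ℕ) → F} {f : 𝕜 → F}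
    {v : ι → 𝕜} {w : κ → 𝕜}
    (hc : ∀ᶠ s in 𝓝 0, HasSum (fun α => (∏ i, (s • v) i ^ α i) • c α) (f s))
    (hc' : ∀ᶠ s in 𝓝 0, HasSum (fun α => (∏ i, (s • w) i ^ α i) • c' α) (f s)) (N : ℕ) :
    homogeneousPart c N v = homogeneousPart c' N w :=
  congrFun (eq_of_hasSum_pow_smul (hc.mono fun _ => hasSum_pow_smul_homogeneousPart)
    (hc'.mono fun _ => hasSum_pow_smul_homogeneousPart)) N

theorem homogeneousPart_eq_of_eq_map_comp {f : (ι → 𝕜) → F} {g : (κ → 𝕜) → G}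
    {c : (ι →₀ ℕ) → F} {c' : (κ →₀ ℕ) → G} {r : ℝ}
    (hf : ∀ v, ‖v‖ < r → HasSum (fun α => (∏ i, v i ^ α i) • c α) (f v))
    (hg : ∀ w, ‖w‖ < r → HasSum (fun α => (∏ i, w i ^ α i) • c' α) (g w))
    (L : G →L[𝕜] F) (A : (ι → 𝕜) →ₗ[𝕜] (κ → 𝕜)) (hfg : ∀ v, ‖v‖ < r → f v = L (g (A v)))
    {v : ι → 𝕜} (hv : ‖v‖ < r) (hAv : ‖A v‖ < r) (N : ℕ) :
    homogeneousPart c N v = homogeneousPart (fun α => L (c' α)) N (A v) := by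
  refine homogeneousPart_eq_of_hasSum (f := fun s => f (s • v)) ?_ ?_ N
  · exact (eventually_norm_smul_lt hv).mono fun s hs => hf _ hs
  · filter_upwards [eventually_norm_smul_lt hv, eventually_norm_smul_lt hAv] with s hs hAs
    rw [hfg _ hs, map_smul]
    simpa only [Function.comp_def, map_smul] using (hg _ hAs).map L L.continuous

theorem homogeneousPart_eq_zero_of_eventually {c : (ι →₀ ℕ) → F} {N : ℕ}
    (h : ∀ᶠ v in 𝓝 (0 : ι → 𝕜), homogeneousPart c N v = 0) (v : ι → 𝕜) :
    homogeneousPart c N v = 0 := by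
  have : Tendsto (fun s : 𝕜 => s • v) (𝓝[≠] 0) (𝓝 0) := by
    simpa using tendsto_nhdsWithin_of_tendsto_nhds
      ((tendsto_id (x := 𝓝 (0 : 𝕜))).smul_const v)
  obtain ⟨s, hs, hs0⟩ := ((this.eventually h).and self_mem_nhdsWithin).exists
  rw [homogeneousPart_smul] at hs
  exact (smul_eq_zero.1 hs).resolve_left (pow_ne_zero _ hs0)

end Normed

theorem coeff_eq_zero_of_homogeneousPart_eq_zero [Field 𝕜] [Infinite 𝕜] [AddCommGroup F]
    [Module 𝕜 F] {c : (ι →₀ ℕ) → F} {N : ℕ} (h : ∀ v : ι → 𝕜, homogeneousPart c N v = 0)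
    {α : ι →₀ ℕ} (hα : α.degree = N) : c α = 0 := by
  refine (Module.forall_dual_apply_eq_zero_iff 𝕜 (c α)).1 fun φ => ?_
  let q : MvPolynomial ι 𝕜 := ∑ β ∈ finsuppAntidiag univ N, MvPolynomial.monomial β (φ (c β))
  have hq : q = 0 := MvPolynomial.funext fun v => by
    simpa [q, MvPolynomial.eval_monomial, Finsupp.prod_fintype, homogeneousPart, mul_comm]
      using congrArg φ (h v)
  simpa [q, MvPolynomial.coeff_sum, MvPolynomial.coeff_monomial,
    (Finsupp.degree_eq_sum α).symm.trans hα] using congrArg (MvPolynomial.coeff α) hq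

end HomogeneousPart

theorem Finsupp.natCast_degree {ι R : Type*} [AddCommMonoidWithOne R] (α : ι →₀ ℕ) :
    (α.degree : R) = α.sum fun _ k => (k : R) := by
  simp [Finsupp.degree_apply, Finsupp.sum]

theorem exists_rates_of_div_lt {Λ κ N : ℝ} (hκ : 0 < κ) (h : Λ / κ < N) :
    ∃ ε₁ ε : ℝ, 0 < ε₁ ∧ ε₁ < κ ∧ 0 < ε ∧ Λ + ε < N * ε₁ := by
  have hΛ : Λ < N * κ := by rwa [div_lt_iff₀ hκ] at h
  have hnear : ∀ᶠ ε₁ in 𝓝[<] κ, 0 < ε₁ ∧ Λ < N * ε₁ :=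
    nhdsWithin_le_nhds <| (lt_mem_nhds hκ).and <|
      (continuous_const.mul continuous_id).continuousAt.eventually (lt_mem_nhds hΛ)
  obtain ⟨ε₁, ⟨hε₁, hΛε₁⟩, hε₁κ⟩ := (hnear.and self_mem_nhdsWithin).exists
  exact ⟨ε₁, (N * ε₁ - Λ) / 2, hε₁, hε₁κ, by linarith, by linarith⟩

theorem eq_zero_of_norm_le_mul_exp {β E : Type*} [NormedAddCommGroup E] {l : Filter β} [l.NeBot]
    {t : β → ℝ} (ht : Tendsto t l atTop) {a : E} {C δ : ℝ} (hδ : δ < 0)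
    (h : ∀ᶠ n in l, ‖a‖ ≤ C * Real.exp (δ * t n)) : a = 0 := by
  have hlim : Tendsto (fun n => C * Real.exp (δ * t n)) l (𝓝 0) := by
    simpa using (Real.tendsto_exp_atBot.comp (ht.const_mul_atTop_of_neg hδ)).const_mul C
  exact norm_le_zero_iff.1 (ge_of_tendsto hlim h)

attribute [local instance] Matrix.normedAddCommGroup Matrix.normedSpace

theorem norm_le_mnorm {d : ℕ} (M : Matrix (Fin d) (Fin d) ℝ) : ‖M‖ ≤ mnorm M := by
  refine (Matrix.norm_le_iff (by unfold mnorm; positivity)).2 fun i j => ?_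
  exact (single_le_sum (fun j _ => abs_nonneg (M i j)) (mem_univ j)).trans
    (single_le_sum (f := fun i => ∑ j, |M i j|) (fun i _ => by positivity) (mem_univ i))

theorem homogeneousPart_eq_zero_of_expansion_contraction {X : Type*} {m dE : ℕ}
    {T : ℝ → X → X}
    {L : ℝ → X → Matrix (Fin dE) (Fin dE) ℝ →ₗ[ℝ] Matrix (Fin dE) (Fin dE) ℝ}
    {D : ℝ → X → (Fin m → ℝ) →ₗ[ℝ] (Fin m → ℝ)}
    {π : X → (Fin m → ℝ) → Matrix (Fin dE) (Fin dE) ℝ}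
    {c : X → (Fin m →₀ ℕ) → Matrix (Fin dE) (Fin dE) ℝ}
    {Λ lam2 : ℝ} (hlam : lam2 < 1) {x : X} {r : ℝ}
    (hexp : ∀ y : X, ∀ v : Fin m → ℝ, ‖v‖ < r →
      HasSum (fun α : Fin m →₀ ℕ => (∏ i, v i ^ α i) • c y α) (π y v))
    (hequiv : ∀ t : ℝ, ∀ v : Fin m → ℝ, ‖v‖ < r →
      π x v = L t (T (-t) x) (π (T (-t) x) (D (-t) x v)))
    {ret : ℕ → ℝ} (hret : Tendsto ret atTop atTop)
    (hgrow : ∀ ε : ℝ, 0 < ε → ∀ α : Fin m →₀ ℕ, ∀ᶠ n in atTop,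
      mnorm (L (ret n) (T (-(ret n)) x) (c (T (-(ret n)) x) α)) ≤
        Real.exp ((Λ + ε) * ret n))
    (hcontr : ∀ ε₁ : ℝ, 0 < ε₁ → ε₁ < 1 - lam2 → ∀ v : Fin m → ℝ, ∀ᶠ n in atTop,
      ‖D (-(ret n)) x v‖ ≤ Real.exp (-ε₁ * ret n) * ‖v‖)
    {N : ℕ} (hN : Λ / (1 - lam2) < N) {v : Fin m → ℝ} (hv : ‖v‖ < r) :
    homogeneousPart (c x) N v = 0 := by
  obtain ⟨ε₁, ε, hε₁, hε₁κ, hε, hrate⟩ := exists_rates_of_div_lt (sub_pos.2 hlam) hN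
  refine eq_zero_of_norm_le_mul_exp hret (sub_neg.2 hrate)
    (C := #(finsuppAntidiag (univ : Finset (Fin m)) N) * ‖v‖ ^ N) ?_
  filter_upwards [hcontr ε₁ hε₁ hε₁κ v, (eventually_all_finset _).2 fun α _ => hgrow ε hε α,
    hret.eventually_ge_atTop 0] with n hD hL ht
  have hDr : ‖D (-ret n) x v‖ < r := by
    have : Real.exp (-ε₁ * ret n) ≤ 1 := Real.exp_le_one_iff.2 (by nlinarith)
    exact hD.trans_lt ((mul_le_of_le_one_left (norm_nonneg v) this).trans_lt hv)
  rw [homogeneousPart_eq_of_eq_map_comp (hexp x) (hexp _) (L (ret n) _).toContinuousLinearMap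
    (D (-ret n) x) (hequiv (ret n)) hv hDr]
  calc _ ≤ #(finsuppAntidiag univ N) * (Real.exp ((Λ + ε) * ret n) * ‖D (-ret n) x v‖ ^ N) :=
        norm_homogeneousPart_le (fun α hα => (norm_le_mnorm _).trans (hL α hα)) _
    _ ≤ #(finsuppAntidiag univ N) *
          (Real.exp ((Λ + ε) * ret n) * (Real.exp (-ε₁ * ret n) * ‖v‖) ^ N) := by
        gcongr
    _ = #(finsuppAntidiag univ N) * ‖v‖ ^ N * Real.exp ((Λ + ε - N * ε₁) * ret n) := by
        rw [mul_pow, ← Real.exp_nat_mul, show (Λ + ε - N * ε₁) * ret n =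
          (Λ + ε) * ret n + N * (-ε₁ * ret n) by ring, Real.exp_add]
        ring

theorem taylor_coefficients_vanish_of_expansion_contraction_general
    {X : Type*} (m dE : ℕ)
    (T : ℝ → X → X)
    (L : ℝ → X → Matrix (Fin dE) (Fin dE) ℝ →ₗ[ℝ] Matrix (Fin dE) (Fin dE) ℝ)
    (D : ℝ → X → (Fin m → ℝ) →ₗ[ℝ] (Fin m → ℝ))
    (π : X → (Fin m → ℝ) → Matrix (Fin dE) (Fin dE) ℝ)
    (c : X → (Fin m →₀ ℕ) → Matrix (Fin dE) (Fin dE) ℝ)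
    (Λ lam2 : ℝ) (hlam : lam2 < 1)
    (x : X) (r : ℝ) (hr : 0 < r)
    -- the convergent Taylor expansion of `π(y, ·)`:
    (hexp : ∀ y : X, ∀ v : Fin m → ℝ, ‖v‖ < r →
      HasSum (fun α : Fin m →₀ ℕ => (∏ i, v i ^ α i) • c y α) (π y v))
    -- equivariance under the flow:
    (hequiv : ∀ t : ℝ, ∀ v : Fin m → ℝ, ‖v‖ < r →
      π x v = L t (T (-t) x) (π (T (-t) x) (D (-t) x v)))
    -- return times to a positive measure set where coefficients are bounded:
    (ret : ℕ → ℝ) (hret : Tendsto ret atTop atTop)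
    -- Oseledets-type growth bound (`Λ` the top Lyapunov exponent of `End(E)`):
    (hgrow : ∀ ε : ℝ, 0 < ε → ∀ α : Fin m →₀ ℕ, ∀ᶠ n in atTop,
      mnorm (L (ret n) (T (-(ret n)) x) (c (T (-(ret n)) x) α)) ≤
        Real.exp ((Λ + ε) * ret n))
    -- uniform contraction of the derivative cocycle at rate `1 − λ₂`:
    (hcontr : ∀ ε₁ : ℝ, 0 < ε₁ → ε₁ < 1 - lam2 → ∀ v : Fin m → ℝ, ∀ᶠ n in atTop,
      ‖D (-(ret n)) x v‖ ≤ Real.exp (-ε₁ * ret n) * ‖v‖) :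
    (∀ α : Fin m →₀ ℕ, Λ / (1 - lam2) < (α.sum fun _ k => (k : ℝ)) → c x α = 0) ∧
    -- hence `π(x,·)` is a polynomial of degree at most `Λ/(1−λ₂)`:
    (∀ v : Fin m → ℝ, ‖v‖ < r →
      HasSum (fun α : {α : Fin m →₀ ℕ // (α.sum fun _ k => (k : ℝ)) ≤ Λ / (1 - lam2)} =>
        (∏ i, v i ^ (α : Fin m →₀ ℕ) i) • c x (α : Fin m →₀ ℕ)) (π x v)) := by
  have vanish : ∀ α : Fin m →₀ ℕ, Λ / (1 - lam2) < (α.sum fun _ k => (k : ℝ)) → c x α = 0 := by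
    intro α hα
    rw [← Finsupp.natCast_degree] at hα
    refine coeff_eq_zero_of_homogeneousPart_eq_zero
      (homogeneousPart_eq_zero_of_eventually (𝕜 := ℝ) ?_) rfl
    filter_upwards [Metric.ball_mem_nhds 0 hr] with v hv
    exact homogeneousPart_eq_zero_of_expansion_contraction hlam hexp hequiv hret hgrow hcontr hα
      (mem_ball_zero_iff.1 hv)
  refine ⟨vanish, fun v hv =>
    (hasSum_subtype_iff_of_support_subset fun α hα => ?_).2 (hexp x v hv)⟩
  by_contra hdeg
  exact hα (by simp only [vanish α (not_le.1 hdeg), smul_zero])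

/-- Rigidity via expansion–contraction: let `π(x,v)` be a measurable family of
endomorphisms, equivariant under the flow `g_t` in the sense
`π(x,v) = g_t(π(g_{−t}x, dg_{−t}v))` (with `L` the cocycle on `End(E)` and `D` the
derivative cocycle on the unstable direction), and real-analytic in `v` with Taylor
expansion `π(x,v) = Σ_α c_α(x) v^α`.  If along return times `ret n → ∞` one has
`‖g_t c_α(g_{−t}x)‖ = o(e^{(Λ+ε)t})` for every `ε > 0` and
`‖dg_{−t}v‖ = o(e^{−ε₁ t})` for every `ε₁ < 1 − λ₂`, then `c_α(x) = 0` whenever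
`|α| > Λ/(1−λ₂)`; hence `π(x,·)` is a polynomial of degree at most `Λ/(1−λ₂)`. -/
theorem taylor_coefficients_vanish_of_expansion_contraction
    {X : Type*} (m dE : ℕ)
    (T : ℝ → X → X)
    (L : ℝ → X → Matrix (Fin dE) (Fin dE) ℝ →ₗ[ℝ] Matrix (Fin dE) (Fin dE) ℝ)
    (D : ℝ → X → (Fin m → ℝ) →ₗ[ℝ] (Fin m → ℝ))
    (π : X → (Fin m → ℝ) → Matrix (Fin dE) (Fin dE) ℝ)
    (c : X → (Fin m →₀ ℕ) → Matrix (Fin dE) (Fin dE) ℝ)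
    (Λ lam2 : ℝ) (hlam : lam2 < 1) (hΛ : 0 ≤ Λ)
    (x : X) (r : ℝ) (hr : 0 < r)
    -- the convergent Taylor expansion of `π(y, ·)`:
    (hexp : ∀ y : X, ∀ v : Fin m → ℝ, ‖v‖ < r →
      HasSum (fun α : Fin m →₀ ℕ => (∏ i, v i ^ α i) • c y α) (π y v))
    -- equivariance under the flow:
    (hequiv : ∀ t : ℝ, ∀ v : Fin m → ℝ, ‖v‖ < r →
      π x v = L t (T (-t) x) (π (T (-t) x) (D (-t) x v)))
    -- return times to a positive measure set where coefficients are bounded: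
    (ret : ℕ → ℝ) (hret : Tendsto ret atTop atTop)
    -- Oseledets-type growth bound (`Λ` the top Lyapunov exponent of `End(E)`):
    (hgrow : ∀ ε : ℝ, 0 < ε → ∀ α : Fin m →₀ ℕ, ∀ᶠ n in atTop,
      mnorm (L (ret n) (T (-(ret n)) x) (c (T (-(ret n)) x) α)) ≤
        Real.exp ((Λ + ε) * ret n))
    -- uniform contraction of the derivative cocycle at rate `1 − λ₂`:
    (hcontr : ∀ ε₁ : ℝ, 0 < ε₁ → ε₁ < 1 - lam2 → ∀ v : Fin m → ℝ, ∀ᶠ n in atTop,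
      ‖D (-(ret n)) x v‖ ≤ Real.exp (-ε₁ * ret n) * ‖v‖) :
    (∀ α : Fin m →₀ ℕ, Λ / (1 - lam2) < (α.sum fun _ k => (k : ℝ)) → c x α = 0) ∧
    -- hence `π(x,·)` is a polynomial of degree at most `Λ/(1−λ₂)`:
    (∀ v : Fin m → ℝ, ‖v‖ < r →
      HasSum (fun α : {α : Fin m →₀ ℕ // (α.sum fun _ k => (k : ℝ)) ≤ Λ / (1 - lam2)} =>
        (∏ i, v i ^ (α : Fin m →₀ ℕ) i) • c x (α : Fin m →₀ ℕ)) (π x v)) :=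
  taylor_coefficients_vanish_of_expansion_contraction_general m dE T L D π c Λ lam2 hlam x r hr hexp
    hequiv ret hret hgrow hcontr

end
end
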